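/- arXiv:1809.02692 — 8 statements merged into one kernel-verified Lean document; each statement's English description precedes it below -/
import Mathlib

section
/- Let X be a geodesic metric space, N a Morse gauge, and let α₁, α₂ : [0,A] → X be N-Morse geodesics with α₁(0) = α₂(0). If there exist s ∈ [0,A] and K > 0 such that dist(α₁(s), im α₂) ≤ K, then dist(α₁(t), α₂(t)) ≤ 8·N(3,0) for all t ∈ [0,A] with t < s − K − 4·N(3,0). -/
/-! Geodesics, quasi-geodesics, projections, contracting and super-contracting
geodesics, and Morse geodesics in a metric space. -/

open Metric Set

section Defs

variable {X : Type*} [MetricSpace X]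

/-- `γ` is a geodesic parametrized by `[a,b]`:
`dist (γ s) (γ t) = |s - t|` for all `s, t ∈ [a,b]`. -/
def IsGeodesicOn (γ : ℝ → X) (a b : ℝ) : Prop :=
  ∀ s ∈ Icc a b, ∀ t ∈ Icc a b, dist (γ s) (γ t) = |s - t|

/-- `X` is a geodesic metric space: every two points are joined by a geodesic. -/
def GeodesicSpace (X : Type*) [MetricSpace X] : Prop :=
  ∀ x y : X, ∃ γ : ℝ → X, IsGeodesicOn γ 0 (dist x y) ∧ γ 0 = x ∧ γ (dist x y) = y

/-- `σ` is a `(lam, eps)`-quasi-geodesic parametrized by `[a,b]`. -/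
def IsQuasiGeodesicOn (σ : ℝ → X) (a b lam eps : ℝ) : Prop :=
  ∀ s ∈ Icc a b, ∀ t ∈ Icc a b,
    (1 / lam) * |s - t| - eps ≤ dist (σ s) (σ t) ∧
      dist (σ s) (σ t) ≤ lam * |s - t| + eps

/-- The projection `π_C(x)`: points of `C` realizing `infDist x C`. -/
def projPt (C : Set X) (x : X) : Set X :=
  {p ∈ C | dist x p = infDist x C}

/-- The map `γ` (with parameter interval `[a,b]`) is `D`-contracting: for any
closed ball `B` disjoint from the image of `γ`, the projection `π_{im γ}(B)`
has diameter at most `D`. -/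
def ContractingOn (γ : ℝ → X) (a b D : ℝ) : Prop :=
  ∀ (z : X) (r : ℝ), Disjoint (closedBall z r) (γ '' Icc a b) →
    ∀ x ∈ closedBall z r, ∀ y ∈ closedBall z r,
      ∀ p ∈ projPt (γ '' Icc a b) x, ∀ q ∈ projPt (γ '' Icc a b) y,
        dist p q ≤ D

/-- `γ` (with parameter interval `[a,b]`) is `D`-super-contracting: every
subsegment of `γ` is `D`-contracting. -/
def SuperContractingOn (γ : ℝ → X) (a b D : ℝ) : Prop :=
  ∀ s t : ℝ, a ≤ s → s ≤ t → t ≤ b → ContractingOn γ s t D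

/-- `γ` (with parameter interval `[a,b]`) is `N`-Morse: every
`(lam, eps)`-quasi-geodesic with endpoints on the image of `γ` stays within
distance `N lam eps` of the image of `γ`. -/
def MorseOn (γ : ℝ → X) (a b : ℝ) (N : ℝ → ℝ → ℝ) : Prop :=
  ∀ lam eps : ℝ, 1 ≤ lam → 0 ≤ eps →
    ∀ (σ : ℝ → X) (c d : ℝ), c ≤ d → IsQuasiGeodesicOn σ c d lam eps →
      σ c ∈ γ '' Icc a b → σ d ∈ γ '' Icc a b →
        ∀ s ∈ Icc c d, infDist (σ s) (γ '' Icc a b) ≤ N lam eps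

end Defs

/-- two `N`-Morse geodesics `α₁, α₂ : [0,A] → X` with the same
starting point which come `K`-close at time `s` satisfy
`dist (α₁ t) (α₂ t) ≤ 8 N(3,0)` for all `t < s - K - 4 N(3,0)`. -/
theorem morse_fellow_traveling {X : Type} [MetricSpace X] (hgeo : GeodesicSpace X)
    (N : ℝ → ℝ → ℝ) (hN : ∀ lam eps, 0 ≤ N lam eps)
    (A : ℝ) (hA : 0 ≤ A) (α₁ α₂ : ℝ → X)
    (h₁ : IsGeodesicOn α₁ 0 A) (h₂ : IsGeodesicOn α₂ 0 A)
    (h₁M : MorseOn α₁ 0 A N) (h₂M : MorseOn α₂ 0 A N)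
    (h0 : α₁ 0 = α₂ 0)
    (s : ℝ) (hs : s ∈ Set.Icc 0 A) (K : ℝ) (hK : 0 < K)
    (hclose : Metric.infDist (α₁ s) (α₂ '' Set.Icc 0 A) ≤ K) :
    ∀ t ∈ Set.Icc 0 A, t < s - K - 4 * N 3 0 →
      dist (α₁ t) (α₂ t) ≤ 8 * N 3 0 := by
  intro t ht htlt
  have hN3 : 0 ≤ N 3 0 := hN 3 0
  set S₁ := α₁ '' Set.Icc 0 A with hS₁def
  set S₂ := α₂ '' Set.Icc 0 A with hS₂def
  -- continuity and compactness of the images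
  have hcont₁ : ContinuousOn α₁ (Set.Icc 0 A) := by
    refine (LipschitzOnWith.of_dist_le_mul (K := 1) ?_).continuousOn
    intro x hx y hy
    rw [h₁ x hx y hy, Real.dist_eq]
    simp
  have hcont₂ : ContinuousOn α₂ (Set.Icc 0 A) := by
    refine (LipschitzOnWith.of_dist_le_mul (K := 1) ?_).continuousOn
    intro x hx y hy
    rw [h₂ x hx y hy, Real.dist_eq]
    simp
  have hcomp₁ : IsCompact S₁ := isCompact_Icc.image_of_continuousOn hcont₁
  have hcomp₂ : IsCompact S₂ := isCompact_Icc.image_of_continuousOn hcont₂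
  have hne₁ : S₁.Nonempty := ⟨α₁ 0, ⟨0, ⟨le_rfl, hA⟩, rfl⟩⟩
  have hne₂ : S₂.Nonempty := ⟨α₂ 0, ⟨0, ⟨le_rfl, hA⟩, rfl⟩⟩
  -- choose a nearest point q = α₂ u of α₁ s on S₂
  obtain ⟨q, hqS, hq⟩ := hcomp₂.exists_infDist_eq_dist hne₂ (α₁ s)
  obtain ⟨u, huI, hqu⟩ := hqS
  have hu0 : 0 ≤ u := huI.1
  have huA : u ≤ A := huI.2
  set d := dist (α₁ s) q with hddef
  have hd0 : 0 ≤ d := dist_nonneg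
  have hdK : d ≤ K := by rw [← hq]; exact hclose
  have hdmin : ∀ p ∈ S₂, d ≤ dist (α₁ s) p := by
    intro p hp
    rw [← hq]
    exact Metric.infDist_le_dist_of_mem hp
  -- geodesic from q to α₁ s
  obtain ⟨β, hβ, hβ0, hβd⟩ := hgeo q (α₁ s)
  have hdc : dist q (α₁ s) = d := by rw [hddef, dist_comm]
  rw [hdc] at hβ hβd
  -- basic distance computations along the geodesics
  have hα₁0s : dist (α₁ 0) (α₁ s) = s := by
    rw [h₁ 0 ⟨le_rfl, hA⟩ s hs, zero_sub, abs_neg, abs_of_nonneg hs.1]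
  have hα₂0u : dist (α₂ 0) (α₂ u) = u := by
    rw [h₂ 0 ⟨le_rfl, hA⟩ u huI, zero_sub, abs_neg, abs_of_nonneg hu0]
  -- u is large: s ≤ u + d
  have hsud : s ≤ u + d := by
    calc s = dist (α₂ 0) (α₁ s) := by rw [← h0, hα₁0s]
    _ ≤ dist (α₂ 0) (α₂ u) + dist (α₂ u) (α₁ s) := dist_triangle _ _ _
    _ = u + d := by rw [hα₂0u, hqu, hdc]
  have htu : t ≤ u := by linarith
  -- define the concatenated path σ
  set σ : ℝ → X := fun r => if r ≤ u then α₂ r else β (r - u) with hσdef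
  have hσle : ∀ r, r ≤ u → σ r = α₂ r := fun r h => if_pos h
  have hσgt : ∀ r, u < r → σ r = β (r - u) := fun r h => if_neg (not_le.2 h)
  -- σ is a (3,0)-quasi-geodesic
  have key : ∀ r ∈ Set.Icc 0 (u + d), ∀ r' ∈ Set.Icc 0 (u + d), r ≤ r' →
      (1 / 3) * |r - r'| - 0 ≤ dist (σ r) (σ r') ∧
        dist (σ r) (σ r') ≤ 3 * |r - r'| + 0 := by
    intro r hr r' hr' hrr'
    have habs : |r - r'| = r' - r := by
      rw [abs_sub_comm]; exact abs_of_nonneg (by linarith)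
    rcases le_or_gt r' u with h' | h'
    · -- both on α₂
      have hrle : r ≤ u := le_trans hrr' h'
      rw [hσle r hrle, hσle r' h',
        h₂ r ⟨hr.1, le_trans hrle huA⟩ r' ⟨hr'.1, le_trans h' huA⟩]
      constructor <;> nlinarith [abs_nonneg (r - r')]
    · rcases le_or_gt r u with h | h
      · -- r on α₂, r' on β
        set b := r' - u with hbdef
        have hb : b ∈ Set.Icc (0 : ℝ) d := ⟨by linarith, by linarith [hr'.2]⟩
        have hβ0b : dist (β 0) (β b) = b := by
          rw [hβ 0 ⟨le_rfl, hd0⟩ b hb, zero_sub, abs_neg, abs_of_nonneg hb.1]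
        have hβbd : dist (β b) (β d) = d - b := by
          rw [hβ b hb d ⟨hd0, le_rfl⟩, abs_of_nonpos (by linarith [hb.2])]
          ring
        have hrI : r ∈ Set.Icc 0 A := ⟨hr.1, le_trans h huA⟩
        have h2ru : dist (α₂ r) (α₂ u) = u - r := by
          rw [h₂ r hrI u huI, abs_of_nonpos (by linarith)]; ring
        have hmem : α₂ r ∈ S₂ := ⟨r, hrI, rfl⟩
        have hdr : d ≤ dist (α₁ s) (α₂ r) := hdmin _ hmem
        rw [hσle r h, hσgt r' h', ← hbdef]
        -- two lower bounds for D := dist (α₂ r) (β b)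
        have hlow1 : u - r - b ≤ dist (α₂ r) (β b) := by
          have tri := dist_triangle (α₂ r) (β b) (α₂ u)
          have hbu : dist (β b) (α₂ u) = b := by
            rw [hqu, ← hβ0, dist_comm, hβ0b]
          rw [h2ru, hbu] at tri
          linarith
        have hlow2 : b ≤ dist (α₂ r) (β b) := by
          have htri := dist_triangle (α₁ s) (β b) (α₂ r)
          have hsb : dist (α₁ s) (β b) = d - b := by
            rw [← hβd, dist_comm, hβbd]
          rw [hsb, dist_comm (β b)] at htri
          linarith
        have hupper : dist (α₂ r) (β b) ≤ (u - r) + b := by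
          have tri := dist_triangle (α₂ r) (α₂ u) (β b)
          have hub : dist (α₂ u) (β b) = b := by rw [hqu, ← hβ0, hβ0b]
          rw [h2ru, hub] at tri
          linarith
        rw [habs]
        have hr'r : r' - r = (u - r) + b := by rw [hbdef]; ring
        constructor
        · rcases le_or_gt (u - r) (2 * b) with hc | hc
          · linarith
          · linarith
        · linarith
      · -- both on β
        rw [hσgt r h, hσgt r' h',
          hβ (r - u) ⟨by linarith, by linarith [hr.2]⟩
            (r' - u) ⟨by linarith, by linarith [hr'.2]⟩,
          show r - u - (r' - u) = r - r' by ring]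
        constructor <;> nlinarith [abs_nonneg (r - r')]
  have hQG : IsQuasiGeodesicOn σ 0 (u + d) 3 0 := by
    intro r hr r' hr'
    rcases le_total r r' with h | h
    · exact key r hr r' hr' h
    · obtain ⟨h1, h2⟩ := key r' hr' r hr h
      rw [dist_comm, abs_sub_comm] at h1 h2
      exact ⟨h1, h2⟩
  -- endpoints of σ are on the image of α₁
  have hstart : σ 0 ∈ S₁ := by
    rw [hσle 0 hu0, ← h0]
    exact ⟨0, ⟨le_rfl, hA⟩, rfl⟩
  have hend : σ (u + d) = α₁ s := by
    rcases eq_or_lt_of_le hd0 with h | h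
    · have hq0 : α₁ s = q := dist_eq_zero.1 (by rw [← hddef, ← h])
      rw [show u + d = u by rw [← h]; ring, hσle u le_rfl, hqu, hq0]
    · rw [hσgt (u + d) (by linarith), show u + d - u = d by ring, hβd]
  have hendmem : σ (u + d) ∈ S₁ := hend ▸ ⟨s, hs, rfl⟩
  -- apply the Morse property of α₁
  have hM := h₁M 3 0 (by norm_num) le_rfl σ 0 (u + d) (by linarith) hQG
    hstart hendmem t ⟨ht.1, by linarith⟩
  rw [hσle t htu] at hM
  -- nearest point α₁ t' to α₂ t
  obtain ⟨p, hpS, hp⟩ := hcomp₁.exists_infDist_eq_dist hne₁ (α₂ t)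
  obtain ⟨t', ht'I, hpt'⟩ := hpS
  have hdist : dist (α₂ t) (α₁ t') ≤ N 3 0 := by rw [hpt', ← hp]; exact hM
  -- |t' - t| ≤ N 3 0
  have hα₁t'0 : dist (α₁ t') (α₁ 0) = t' := by
    rw [h₁ t' ht'I 0 ⟨le_rfl, hA⟩, sub_zero, abs_of_nonneg ht'I.1]
  have hα₂t0 : dist (α₂ t) (α₁ 0) = t := by
    rw [h0, h₂ t ht 0 ⟨le_rfl, hA⟩, sub_zero, abs_of_nonneg ht.1]
  have htt' : |t' - t| ≤ N 3 0 := by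
    have := abs_dist_sub_le (α₁ t') (α₂ t) (α₁ 0)
    rw [hα₁t'0, hα₂t0] at this
    exact le_trans this (by rw [dist_comm]; exact hdist)
  -- conclude
  have h1 : dist (α₁ t) (α₁ t') = |t - t'| := h₁ t ht t' ht'I
  calc dist (α₁ t) (α₂ t) ≤ dist (α₁ t) (α₁ t') + dist (α₁ t') (α₂ t) :=
        dist_triangle _ _ _
    _ ≤ |t - t'| + N 3 0 := by
        rw [h1, dist_comm]; linarith [hdist]
    _ ≤ N 3 0 + N 3 0 := by
        rw [abs_sub_comm]; linarith
    _ ≤ 8 * N 3 0 := by linarith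
end

section
/- Let X be a proper geodesic metric space, D ≥ 0, and let α be a D-contracting geodesic in X. Then projection to α is coarsely distance decreasing: for any points x₁, x₂ ∈ X and any projection points p₁ ∈ π_{im α}(x₁) and p₂ ∈ π_{im α}(x₂), one has dist(p₁,p₂) ≤ dist(x₁,x₂) + 4D. -/
/-! Geodesics, quasi-geodesics, projections, contracting and super-contracting
geodesics, and Morse geodesics in a metric space. -/

open Metric Set

/-! Follow a geodesic `σ` from `x₁` to `x₂` and let `u ≤ v` be the first and last times at which
it comes within `D` of `A = im α`. Before time `u` the geodesic stays farther than `D` from `A`,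
so it can be cut into steps of length at most `D`, each inside a ball disjoint from `A`; every
step moves the projection by at most `D` and only the last one may be shorter than `D`, so the
projection moves by at most `u + D` up to time `u`. The same holds after time `v`, and between
`σ u` and `σ v` the triangle inequality costs `(v - u) + 2D`. -/

section Contracting

variable {X : Type*} [MetricSpace X] {A : Set X} {D : ℝ} {σ : ℝ → X} {c d : ℝ} {x y p q : X}

theorem LipschitzOnWith.dist_le_sub {s t : ℝ}
    (hσ : LipschitzOnWith 1 σ (Icc c d)) (hs : s ∈ Icc c d) (ht : t ∈ Icc c d) (hst : s ≤ t) :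
    dist (σ s) (σ t) ≤ t - s := by
  simpa [Real.dist_eq, abs_of_nonpos (sub_nonpos.2 hst)] using hσ.dist_le_mul s hs t ht

theorem LipschitzOnWith.comp_neg (hσ : LipschitzOnWith 1 σ (Icc c d)) :
    LipschitzOnWith 1 (fun t ↦ σ (-t)) (Icc (-d) (-c)) := by
  refine LipschitzOnWith.of_dist_le_mul fun s hs t ht ↦ ?_
  have := hσ.dist_le_mul (-s) ⟨le_neg.1 hs.2, neg_le.1 hs.1⟩ (-t) ⟨le_neg.1 ht.2, neg_le.1 ht.1⟩
  simpa [Real.dist_eq, abs_sub_comm, neg_add_eq_sub] using this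

theorem IsGeodesicOn.lipschitzOnWith {γ : ℝ → X} {a b : ℝ} (hγ : IsGeodesicOn γ a b) :
    LipschitzOnWith 1 γ (Icc a b) :=
  LipschitzOnWith.of_dist_le_mul fun s hs t ht ↦ by simp [hγ s hs t ht, Real.dist_eq]

theorem IsCompact.projPt_nonempty (hA : IsCompact A) (hne : A.Nonempty) (x : X) :
    (projPt A x).Nonempty :=
  let ⟨p, hpA, hp⟩ := hA.exists_infDist_eq_dist hne x
  ⟨p, hpA, hp.symm⟩

theorem dist_le_infDist_add_dist_add_infDist (hp : p ∈ projPt A x) (hq : q ∈ projPt A y) :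
    dist p q ≤ infDist x A + dist x y + infDist y A := by
  calc dist p q ≤ dist p x + dist x y + dist y q := dist_triangle4 _ _ _ _
    _ = infDist x A + dist x y + infDist y A := by rw [dist_comm p, hp.2, hq.2]

def IsContracting (A : Set X) (D : ℝ) : Prop :=
  ∀ (z : X) (r : ℝ), Disjoint (closedBall z r) A →
    ∀ x ∈ closedBall z r, ∀ y ∈ closedBall z r,
      ∀ p ∈ projPt A x, ∀ q ∈ projPt A y, dist p q ≤ D

namespace IsContracting

theorem mono {E : ℝ} (hA : IsContracting A D) (hDE : D ≤ E) : IsContracting A E :=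
  fun z r hzr x hx y hy p hp q hq ↦ (hA z r hzr x hx y hy p hp q hq).trans hDE

theorem dist_projPt_self_le (hA : IsContracting A D) (hD : 0 ≤ D)
    (hp : p ∈ projPt A x) (hq : q ∈ projPt A x) : dist p q ≤ D := by
  by_cases hx : x ∈ A
  · have hpx : p = x := by
      simpa [infDist_zero_of_mem hx, eq_comm] using hp.2
    have hqx : q = x := by
      simpa [infDist_zero_of_mem hx, eq_comm] using hq.2
    simpa [hpx, hqx] using hD
  · have hball : Disjoint (closedBall x 0) A := by
      rwa [closedBall_zero, disjoint_singleton_left]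
    exact hA x 0 hball x (mem_closedBall_self le_rfl) x (mem_closedBall_self le_rfl) p hp q hq

theorem dist_projPt_le_of_dist_lt_infDist (hA : IsContracting A D)
    (hxy : dist x y < infDist x A) (hp : p ∈ projPt A x) (hq : q ∈ projPt A y) :
    dist p q ≤ D := by
  have hball : Disjoint (closedBall x (dist x y)) A :=
    disjoint_left.2 fun w hw hwA ↦ by
      have := infDist_le_dist_of_mem (x := x) hwA
      rw [mem_closedBall, dist_comm] at hw
      linarith
  exact hA x _ hball x (mem_closedBall_self dist_nonneg) y
    (mem_closedBall.2 (dist_comm y x).le) p hp q hq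

theorem dist_projPt_le_of_forall_Ico (hA : IsContracting A D) (hAc : IsCompact A) (hD : 0 < D)
    (hσ : LipschitzOnWith 1 σ (Icc c d)) (hcd : c ≤ d)
    (hfar : ∀ t ∈ Ico c d, D < infDist (σ t) A)
    (hp : p ∈ projPt A (σ c)) (hq : q ∈ projPt A (σ d)) :
    dist p q ≤ d - c + D := by
  obtain ⟨n, hn⟩ := exists_nat_ge ((d - c) / D)
  rw [div_le_iff₀ hD] at hn
  induction n generalizing c p with
  | zero =>
    obtain rfl : c = d := le_antisymm hcd (by simpa using hn)
    linarith [hA.dist_projPt_self_le hD.le hp hq]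
  | succ n ih =>
    rcases hcd.eq_or_lt with rfl | hlt
    · linarith [hA.dist_projPt_self_le hD.le hp hq]
    have hstep {t : ℝ} (ht : t ∈ Icc c d) (htc : t - c ≤ D) {r : X} (hr : r ∈ projPt A (σ t)) :
        dist p r ≤ D :=
      hA.dist_projPt_le_of_dist_lt_infDist
        ((hσ.dist_le_sub (left_mem_Icc.2 hcd) ht ht.1).trans_lt
          (htc.trans_lt (hfar c ⟨le_rfl, hlt⟩))) hp hr
    by_cases hshort : d - c ≤ D
    · linarith [hstep (right_mem_Icc.2 hcd) hshort hq]
    obtain ⟨r, hr⟩ := hAc.projPt_nonempty ⟨p, hp.1⟩ (σ (c + D))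
    have hcD : c + D ∈ Icc c d := ⟨by linarith, by linarith⟩
    have hrq : dist r q ≤ d - (c + D) + D :=
      ih (hσ.mono (Icc_subset_Icc_left hcD.1)) hcD.2
        (fun t ht ↦ hfar t ⟨by linarith [ht.1], ht.2⟩) hr (by push_cast at hn; linarith)
    linarith [dist_triangle p r q, hstep hcD (by linarith) hr]

theorem dist_projPt_le_of_forall_Ioc (hA : IsContracting A D) (hAc : IsCompact A) (hD : 0 < D)
    (hσ : LipschitzOnWith 1 σ (Icc c d)) (hcd : c ≤ d)
    (hfar : ∀ t ∈ Ioc c d, D < infDist (σ t) A)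
    (hp : p ∈ projPt A (σ c)) (hq : q ∈ projPt A (σ d)) :
    dist p q ≤ d - c + D := by
  have := hA.dist_projPt_le_of_forall_Ico hAc hD hσ.comp_neg (neg_le_neg hcd)
    (fun t ht ↦ hfar (-t) ⟨lt_neg.1 ht.2, neg_le.1 ht.1⟩)
    (by rwa [neg_neg]) (by rwa [neg_neg] : p ∈ projPt A (σ (- -c)))
  rw [dist_comm]
  linarith

theorem dist_projPt_le_of_lipschitzOnWith (hA : IsContracting A D) (hAc : IsCompact A)
    (hD : 0 < D) (hσ : LipschitzOnWith 1 σ (Icc c d)) (hcd : c ≤ d)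
    (hp : p ∈ projPt A (σ c)) (hq : q ∈ projPt A (σ d)) :
    dist p q ≤ d - c + 4 * D := by
  set S := {t ∈ Icc c d | infDist (σ t) A ≤ D}
  have hfar {t : ℝ} (ht : t ∈ Icc c d) (htS : t ∉ S) : D < infDist (σ t) A :=
    not_le.1 fun h ↦ htS ⟨ht, h⟩
  rcases S.eq_empty_or_nonempty with hS | hS
  · have := hA.dist_projPt_le_of_forall_Ico hAc hD hσ hcd
      (fun t ht ↦ hfar (Ico_subset_Icc_self ht) (hS ▸ notMem_empty t)) hp hq
    linarith
  have hSc : IsCompact S :=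
    isCompact_Icc.of_isClosed_subset
      (((continuous_infDist_pt A).comp_continuousOn hσ.continuousOn).preimage_isClosed_of_isClosed
        isClosed_Icc isClosed_Iic) inter_subset_left
  set u := sInf S
  set v := sSup S
  have hu : u ∈ S := hSc.sInf_mem hS
  have hv : v ∈ S := hSc.sSup_mem hS
  obtain ⟨r, hr⟩ := hAc.projPt_nonempty ⟨p, hp.1⟩ (σ u)
  obtain ⟨s, hs⟩ := hAc.projPt_nonempty ⟨p, hp.1⟩ (σ v)
  have hpr : dist p r ≤ u - c + D :=
    hA.dist_projPt_le_of_forall_Ico hAc hD (hσ.mono (Icc_subset_Icc_right hu.1.2)) hu.1.1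
      (fun t ht ↦ hfar ⟨ht.1, ht.2.le.trans hu.1.2⟩ fun htS ↦
        (csInf_le hSc.bddBelow htS).not_gt ht.2) hp hr
  have hrs : dist r s ≤ D + (v - u) + D := by
    have huv := hσ.dist_le_sub hu.1 hv.1 (csInf_le_csSup hS hSc.bddBelow hSc.bddAbove)
    linarith [dist_le_infDist_add_dist_add_infDist hr hs, hu.2, hv.2]
  have hsq : dist s q ≤ d - v + D :=
    hA.dist_projPt_le_of_forall_Ioc hAc hD (hσ.mono (Icc_subset_Icc_left hv.1.1)) hv.1.2
      (fun t ht ↦ hfar ⟨hv.1.1.trans ht.1.le, ht.2⟩ fun htS ↦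
        (le_csSup hSc.bddAbove htS).not_gt ht.1) hs hq
  linarith [dist_triangle4 p r s q]

end IsContracting

end Contracting

theorem contracting_proj_coarsely_distance_decreasing_general {X : Type} [MetricSpace X]
    (hgeo : GeodesicSpace X) (D : ℝ) (hD : 0 ≤ D)
    (α : ℝ → X) (a b : ℝ)
    (hα : IsGeodesicOn α a b) (hcon : ContractingOn α a b D)
    (x₁ x₂ : X) (p₁ p₂ : X)
    (hp₁ : p₁ ∈ projPt (α '' Set.Icc a b) x₁)
    (hp₂ : p₂ ∈ projPt (α '' Set.Icc a b) x₂) :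
    dist p₁ p₂ ≤ dist x₁ x₂ + 4 * D := by
  have hcon : IsContracting (α '' Icc a b) D := hcon
  have hAc : IsCompact (α '' Icc a b) :=
    isCompact_Icc.image_of_continuousOn hα.lipschitzOnWith.continuousOn
  obtain ⟨σ, hσ, hσ₀, hσ₁⟩ := hgeo x₁ x₂
  -- the chaining argument needs a positive constant, so run it with `D + ε / 4`
  refine le_of_forall_pos_le_add fun ε hε ↦ ?_
  have hcon' := hcon.mono (le_add_of_nonneg_right (by positivity : 0 ≤ ε / 4))
  have := hcon'.dist_projPt_le_of_lipschitzOnWith hAc (by positivity) hσ.lipschitzOnWith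
    dist_nonneg (hσ₀ ▸ hp₁) (hσ₁ ▸ hp₂)
  linarith

/-- projection to a `D`-contracting geodesic in a proper geodesic
metric space is coarsely distance decreasing:
`dist p₁ p₂ ≤ dist x₁ x₂ + 4D`. -/
theorem contracting_proj_coarsely_distance_decreasing {X : Type} [MetricSpace X]
    [ProperSpace X] (hgeo : GeodesicSpace X) (D : ℝ) (hD : 0 ≤ D)
    (α : ℝ → X) (a b : ℝ) (hab : a ≤ b)
    (hα : IsGeodesicOn α a b) (hcon : ContractingOn α a b D)
    (x₁ x₂ : X) (p₁ p₂ : X)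
    (hp₁ : p₁ ∈ projPt (α '' Set.Icc a b) x₁)
    (hp₂ : p₂ ∈ projPt (α '' Set.Icc a b) x₂) :
    dist p₁ p₂ ≤ dist x₁ x₂ + 4 * D :=
  contracting_proj_coarsely_distance_decreasing_general hgeo D hD α a b hα hcon x₁ x₂ p₁ p₂ hp₁ hp₂
end

section
/- Let X be a proper geodesic metric space, D ≥ 0, and let α be a D-contracting geodesic in X. Let x, y ∈ X and let β be a geodesic from x to y whose image is at distance greater than D from the image of α (that is, dist(b, im α) > D for every point b on β). Then for any projection points p ∈ π_{im α}(x) and q ∈ π_{im α}(y), one has dist(p,q) ≤ dist(x,y) + D. -/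
/-! Geodesics, quasi-geodesics, projections, contracting and super-contracting
geodesics, and Morse geodesics in a metric space. -/

open Metric Set

/-- if `β` is a geodesic from `x` to `y` whose image stays at
distance greater than `D` from a `D`-contracting geodesic `α`, then any
projection points `p ∈ π_{im α}(x)`, `q ∈ π_{im α}(y)` satisfy
`dist p q ≤ dist x y + D`. -/
theorem contracting_proj_far_segment {X : Type} [MetricSpace X]
    [ProperSpace X] (hgeo : GeodesicSpace X) (D : ℝ) (hD : 0 ≤ D)
    (α : ℝ → X) (a b : ℝ) (hab : a ≤ b)
    (hα : IsGeodesicOn α a b) (hcon : ContractingOn α a b D)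
    (x y : X) (β : ℝ → X)
    (hβ : IsGeodesicOn β 0 (dist x y)) (hβ0 : β 0 = x) (hβ1 : β (dist x y) = y)
    (hfar : ∀ s ∈ Set.Icc 0 (dist x y),
      D < Metric.infDist (β s) (α '' Set.Icc a b))
    (p q : X)
    (hp : p ∈ projPt (α '' Set.Icc a b) x)
    (hq : q ∈ projPt (α '' Set.Icc a b) y) :
    dist p q ≤ dist x y + D := by
  set A := α '' Set.Icc a b with hA
  set L := dist x y with hL
  have hL0 : 0 ≤ L := dist_nonneg
  have hAne : A.Nonempty := ⟨α a, a, ⟨le_refl a, hab⟩, rfl⟩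
  have hαcont : ContinuousOn α (Set.Icc a b) := by
    have : LipschitzOnWith 1 α (Set.Icc a b) := by
      apply LipschitzOnWith.of_dist_le_mul
      intro s hs t ht
      rw [hα s hs t ht]
      simp [Real.dist_eq]
    exact this.continuousOn
  have hAcomp : IsCompact A := isCompact_Icc.image_of_continuousOn hαcont
  have hproj : ∀ z : X, ∃ w, w ∈ projPt A z := by
    intro z
    obtain ⟨w, hw, hwd⟩ := hAcomp.exists_infDist_eq_dist hAne z
    exact ⟨w, hw, hwd.symm⟩
  have hβcont : ContinuousOn β (Set.Icc 0 L) := by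
    have : LipschitzOnWith 1 β (Set.Icc 0 L) := by
      apply LipschitzOnWith.of_dist_le_mul
      intro s hs t ht
      rw [hβ s hs t ht]
      simp [Real.dist_eq]
    exact this.continuousOn
  obtain ⟨s₀, hs₀mem, hs₀min⟩ := isCompact_Icc.exists_isMinOn (Set.nonempty_Icc.2 hL0)
      ((continuous_infDist_pt A).comp_continuousOn hβcont)
  have hs₀ : ∀ s ∈ Set.Icc 0 L, Metric.infDist (β s₀) A ≤ Metric.infDist (β s) A :=
    fun s hs => hs₀min hs
  set δ := Metric.infDist (β s₀) A with hδ
  have hDδ : D < δ := hfar s₀ hs₀mem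
  set r := (D + δ) / 2 with hr
  have hDr : D < r := by rw [hr]; linarith
  have hrpos : 0 < r := lt_of_le_of_lt hD hDr
  have hrlt : ∀ s ∈ Set.Icc 0 L, r < Metric.infDist (β s) A := by
    intro s hs
    have := hs₀ s hs
    rw [hr]; linarith
  have hdisj : ∀ s ∈ Set.Icc 0 L, Disjoint (Metric.closedBall (β s) r) A := by
    intro s hs
    rw [Set.disjoint_left]
    intro z hz hzA
    have h1 : Metric.infDist (β s) A ≤ dist (β s) z := Metric.infDist_le_dist_of_mem hzA
    have h2 : dist (β s) z ≤ r := by rw [dist_comm]; exact Metric.mem_closedBall.1 hz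
    have := hrlt s hs
    linarith
  have step : ∀ s ∈ Set.Icc 0 L, ∀ t ∈ Set.Icc 0 L, |s - t| ≤ r →
      ∀ p' ∈ projPt A (β s), ∀ q' ∈ projPt A (β t), dist p' q' ≤ D := by
    intro s hs t ht hst p' hp' q' hq'
    refine hcon (β s) r (hdisj s hs) (β s) ?_ (β t) ?_ p' hp' q' hq'
    · simp [Metric.mem_closedBall, hrpos.le]
    · rw [Metric.mem_closedBall, hβ t ht s hs, abs_sub_comm]
      exact hst
  set n : ℕ := max 1 ⌈L / r⌉₊ with hn
  have hn1 : 1 ≤ n := le_max_left _ _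
  have hnpos : (0 : ℝ) < (n : ℝ) := by exact_mod_cast lt_of_lt_of_le one_pos hn1
  have hspac : L / (n : ℝ) ≤ r := by
    rw [div_le_iff₀ hnpos]
    have h1 : L / r ≤ (⌈L / r⌉₊ : ℝ) := Nat.le_ceil _
    have h2 : ((⌈L / r⌉₊ : ℕ) : ℝ) ≤ (n : ℝ) := by exact_mod_cast le_max_right 1 ⌈L / r⌉₊
    have h3 := (div_le_iff₀ hrpos).1 (h1.trans h2)
    linarith [h3]
  have hmem : ∀ i : ℕ, i ≤ n → ((i : ℝ) * (L / n)) ∈ Set.Icc (0:ℝ) L := by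
    intro i hi
    constructor
    · positivity
    · have hi' : (i : ℝ) ≤ (n : ℝ) := by exact_mod_cast hi
      have h4 : (i : ℝ) * (L / n) ≤ (n : ℝ) * (L / n) :=
        mul_le_mul_of_nonneg_right hi' (by positivity)
      rwa [mul_div_cancel₀ L (ne_of_gt hnpos)] at h4
  have hgap : ∀ i : ℕ, |(i : ℝ) * (L / n) - ((i : ℝ) + 1) * (L / n)| ≤ r := by
    intro i
    have : (i : ℝ) * (L / n) - ((i : ℝ) + 1) * (L / n) = -(L / n) := by ring
    rw [this, abs_neg, abs_of_nonneg (by positivity)]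
    exact hspac
  have claim : ∀ i : ℕ, i ≤ n →
      ∃ p', p' ∈ projPt A (β ((i : ℝ) * (L / n))) ∧ dist p p' ≤ (i : ℝ) * D := by
    intro i
    induction i with
    | zero =>
        intro _
        refine ⟨p, ?_, by simp⟩
        simpa [hβ0] using hp
    | succ i ih =>
        intro hi
        obtain ⟨p', hp', hd⟩ := ih (Nat.le_of_succ_le hi)
        obtain ⟨q', hq'⟩ := hproj (β (((i : ℝ) + 1) * (L / n)))
        have hmem1 := hmem i (Nat.le_of_succ_le hi)
        have hmem2 : (((i : ℝ) + 1) * (L / n)) ∈ Set.Icc (0:ℝ) L := by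
          have := hmem (i + 1) hi
          push_cast at this
          exact this
        have hst := step _ hmem1 _ hmem2 (hgap i) p' hp' q' hq'
        refine ⟨q', by push_cast; exact hq', ?_⟩
        have := dist_triangle p p' q'
        push_cast
        linarith
  obtain ⟨m, hm⟩ : ∃ m, n = m + 1 := ⟨n - 1, by omega⟩
  obtain ⟨p', hp', hd⟩ := claim m (by omega)
  have hqL : q ∈ projPt A (β L) := by simpa [hβ1] using hq
  have hLeq : ((m : ℝ) + 1) * (L / n) = L := by
    have : ((n : ℕ) : ℝ) = (m : ℝ) + 1 := by rw [hm]; push_cast; ring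
    rw [← this, mul_div_cancel₀ L (ne_of_gt hnpos)]
  have hlastgap : |(m : ℝ) * (L / n) - L| ≤ r := by
    have h := hgap m
    rwa [hLeq] at h
  have hlast : dist p' q ≤ D :=
    step _ (hmem m (by omega)) L (Set.right_mem_Icc.2 hL0) hlastgap p' hp' q hqL
  have htri := dist_triangle p p' q
  have hnD : (n : ℝ) * D ≤ L + D := by
    rcases Nat.eq_zero_or_pos ⌈L / r⌉₊ with h0 | hpos
    · have hne : n = 1 := by rw [hn, h0]; simp
      rw [hne]; push_cast; linarith
    · have hne : n = ⌈L / r⌉₊ := max_eq_right hpos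
      have h1 : (⌈L / r⌉₊ : ℝ) < L / r + 1 :=
        Nat.ceil_lt_add_one (div_nonneg hL0 hrpos.le)
      have h2 : (n : ℝ) * D ≤ (L / r + 1) * D := by
        apply mul_le_mul_of_nonneg_right _ hD
        rw [hne]; exact h1.le
      have h3 : (L / r) * D ≤ L := by
        rw [div_mul_eq_mul_div, div_le_iff₀ hrpos]
        nlinarith
      have h4 : (L / r + 1) * D = (L / r) * D + D := by ring
      linarith
  have hmD : (m : ℝ) * D + D = (n : ℝ) * D := by
    rw [hm]; push_cast; ring
  linarith
end

section
/- Let X be a proper geodesic metric space, D ≥ 0, and let α be a D-contracting geodesic in X. Then α is δ-slim with δ = 7D + 1: for every x ∈ X, every p ∈ π_{im α}(x), and every geodesic β from x to a point on α, dist(p, im β) ≤ 7D + 1. -/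
/-! Geodesics, quasi-geodesics, projections, contracting and super-contracting
geodesics, and Morse geodesics in a metric space. -/

open Metric Set

/-- a `D`-contracting geodesic `α` in a proper geodesic metric
space is `(7D+1)`-slim: for every `x`, every `p ∈ π_{im α}(x)`, and every
geodesic `β` from `x` to a point on `α`, `dist p (im β) ≤ 7D + 1`. -/
theorem contracting_is_slim {X : Type} [MetricSpace X]
    [ProperSpace X] (hgeo : GeodesicSpace X) (D : ℝ) (hD : 0 ≤ D)
    (α : ℝ → X) (a b : ℝ) (hab : a ≤ b)
    (hα : IsGeodesicOn α a b) (hcon : ContractingOn α a b D) :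
    ∀ x : X, ∀ p ∈ projPt (α '' Set.Icc a b) x,
      ∀ (β : ℝ → X) (L : ℝ), 0 ≤ L → IsGeodesicOn β 0 L → β 0 = x →
        β L ∈ α '' Set.Icc a b →
          Metric.infDist p (β '' Set.Icc 0 L) ≤ 7 * D + 1 := by
  intro x p hp β L hL hβ hβ0 hβL
  by_contra hcon7
  push_neg at hcon7
  set A := α '' Set.Icc a b with hA
  obtain ⟨hpA, hpd⟩ := hp
  set r : ℝ := dist x p with hr_def
  have hAne : A.Nonempty := ⟨α a, a, ⟨le_refl a, hab⟩, rfl⟩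
  have hαlip : LipschitzOnWith 1 α (Set.Icc a b) := by
    apply LipschitzOnWith.of_dist_le_mul
    intro s hs t ht
    rw [hα s hs t ht, Real.dist_eq, NNReal.coe_one, one_mul]
  have hAcomp : IsCompact A := isCompact_Icc.image_of_continuousOn hαlip.continuousOn
  have hproj : ∀ w : X, ∃ q, q ∈ projPt A w := by
    intro w
    obtain ⟨q, hqA, hq⟩ := hAcomp.exists_infDist_eq_dist hAne w
    exact ⟨q, hqA, hq.symm⟩
  -- key consequence of contraction
  have key : ∀ (z : X) (ρ : ℝ) (u v : X), ρ < infDist z A →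
      dist u z ≤ ρ → dist v z ≤ ρ →
      ∀ qu ∈ projPt A u, ∀ qv ∈ projPt A v, dist qu qv ≤ D := by
    intro z ρ u v hρ hu hv qu hqu qv hqv
    refine hcon z ρ ?_ u (mem_closedBall.mpr hu) v (mem_closedBall.mpr hv) qu hqu qv hqv
    rw [Set.disjoint_left]
    intro w hw hwA
    have h1 : infDist z A ≤ dist z w := infDist_le_dist_of_mem hwA
    have h2 : dist w z ≤ ρ := mem_closedBall.mp hw
    rw [dist_comm] at h2
    linarith
  -- the distance function to A along β
  set f : ℝ → ℝ := fun t => infDist (β t) A with hf_def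
  have H : ∀ t ∈ Set.Icc 0 L, 7 * D + 1 < dist p (β t) := by
    intro t ht
    have : infDist p (β '' Set.Icc 0 L) ≤ dist p (β t) :=
      infDist_le_dist_of_mem ⟨t, ht, rfl⟩
    linarith
  have h0L : (0:ℝ) ∈ Set.Icc 0 L := ⟨le_refl 0, hL⟩
  have hr : 7 * D + 1 < r := by
    have := H 0 h0L
    rw [hβ0, dist_comm] at this
    exact this
  have hr_inf : infDist x A = r := hpd.symm
  have hfq : ∀ t, ∀ q ∈ projPt A (β t), dist (β t) q = f t := fun t q hq => hq.2
  -- distance from x to β t is t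
  have hdx : ∀ t ∈ Set.Icc 0 L, dist x (β t) = t := by
    intro t ht
    have := hβ 0 h0L t ht
    rw [hβ0] at this
    rw [this, abs_of_nonpos (by linarith [ht.1]), neg_sub, sub_zero]
  -- below r, projections of β t are D-close to p
  have hfr : ∀ t ∈ Set.Icc 0 L, t < r → 2 * D + 1/2 < f t := by
    intro t ht htr
    obtain ⟨q, hq⟩ := hproj (β t)
    have hdq : dist p q ≤ D := by
      refine key x t x (β t) (by rw [hr_inf]; exact htr) (by simp [ht.1]) ?_ p ⟨hpA, hpd⟩ q hq
      rw [dist_comm]; exact le_of_eq (hdx t ht)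
    have h1 := H t ht
    have h2 : dist p (β t) ≤ dist p q + dist q (β t) := dist_triangle _ _ _
    have h3 : dist q (β t) = f t := by rw [dist_comm]; exact hq.2
    linarith
  -- f is 1-Lipschitz
  have hflip : ∀ s ∈ Set.Icc 0 L, ∀ t ∈ Set.Icc 0 L, f s ≤ f t + |s - t| := by
    intro s hs t ht
    have h1 : infDist (β s) A ≤ infDist (β t) A + dist (β s) (β t) :=
      infDist_le_infDist_add_dist
    rwa [hβ s hs t ht] at h1
  set c : ℝ := 2 * D + 1/2 with hc_def
  set S : Set ℝ := {t | t ∈ Set.Icc 0 L ∧ f t ≤ c} with hS_def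
  have hLS : L ∈ S := by
    constructor
    · exact ⟨hL, le_refl L⟩
    · have : f L = 0 := infDist_zero_of_mem hβL
      rw [this]; positivity
  have hSne : S.Nonempty := ⟨L, hLS⟩
  have hSbdd : BddBelow S := ⟨0, fun t ht => ht.1.1⟩
  set t₁ : ℝ := sInf S with ht₁_def
  have ht₁L : t₁ ≤ L := csInf_le hSbdd hLS
  have ht₁0 : 0 ≤ t₁ := le_csInf hSne (fun t ht => ht.1.1)
  have ht₁r : r ≤ t₁ := by
    refine le_csInf hSne (fun t ht => ?_)
    by_contra hcontra
    push_neg at hcontra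
    have := hfr t ht.1 hcontra
    linarith [ht.2]
  have ht₁mem : t₁ ∈ Set.Icc 0 L := ⟨ht₁0, ht₁L⟩
  have hft₁ : f t₁ ≤ c := by
    by_contra hcontra
    push_neg at hcontra
    set δ : ℝ := f t₁ - c with hδ_def
    have hδpos : 0 < δ := by linarith
    obtain ⟨t, htS, htlt⟩ := exists_lt_of_csInf_lt hSne (show sInf S < t₁ + δ by linarith)
    have h1 : f t₁ ≤ f t + |t₁ - t| := hflip t₁ ht₁mem t htS.1
    have h2 : t₁ ≤ t := csInf_le hSbdd htS
    have h3 : |t₁ - t| = t - t₁ := by rw [abs_of_nonpos (by linarith)]; ring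
    have := htS.2
    rw [h3] at h1
    linarith
  have hfgt : ∀ t ∈ Set.Icc 0 L, t < t₁ → c < f t := by
    intro t ht htlt
    by_contra hcontra
    push_neg at hcontra
    have : t₁ ≤ t := csInf_le hSbdd ⟨ht, hcontra⟩
    linarith
  set s₀ : ℝ := r - 1/8 with hs₀_def
  set step : ℝ := 2 * D + 3/8 with hstep_def
  have hstep_pos : 0 < step := by positivity
  have hs₀0 : 0 ≤ s₀ := by simp only [hs₀_def]; linarith
  have hs₀t₁ : s₀ ≤ t₁ := by simp only [hs₀_def]; linarith
  set seq : ℕ → ℝ := fun k => min (s₀ + k * step) t₁ with hseq_def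
  have hseq_left : ∀ k : ℕ, seq k ≤ s₀ + k * step := fun k => min_le_left _ _
  have hseq_mem : ∀ k, seq k ∈ Set.Icc 0 L := by
    intro k
    constructor
    · refine le_min ?_ ht₁0
      have : (0:ℝ) ≤ k * step := by positivity
      linarith
    · exact le_trans (min_le_right _ _) ht₁L
  have hseq_le : ∀ k, seq k ≤ t₁ := fun k => min_le_right _ _
  -- the chain of projections
  have chain : ∀ k : ℕ, ∃ q ∈ projPt A (β (seq k)), dist p q ≤ (k + 1) * D := by
    intro k
    induction k with
    | zero =>
      obtain ⟨q, hq⟩ := hproj (β (seq 0))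
      refine ⟨q, hq, ?_⟩
      have hseq0 : seq 0 = s₀ := by
        simp only [hseq_def, Nat.cast_zero, zero_mul, add_zero]
        exact min_eq_left hs₀t₁
      have hdq : dist p q ≤ D := by
        refine key x s₀ x (β (seq 0)) (by rw [hr_inf]; simp only [hs₀_def]; linarith)
          (by simp [hs₀0]) ?_ p ⟨hpA, hpd⟩ q hq
        rw [dist_comm, hdx (seq 0) (hseq_mem 0), hseq0]
      simpa using hdq
    | succ k ih =>
      obtain ⟨q, hq, hqd⟩ := ih
      rcases le_or_gt t₁ (s₀ + k * step) with hcase | hcase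
      · -- seq (k+1) = seq k = t₁
        have h1 : seq k = t₁ := min_eq_right hcase
        have h2 : seq (k+1) = t₁ := by
          refine min_eq_right ?_
          push_cast
          nlinarith [hstep_pos]
        rw [h2, ← h1]
        refine ⟨q, hq, ?_⟩
        have : ((k:ℝ) + 1) * D ≤ ((k:ℝ) + 1 + 1) * D := by nlinarith
        push_cast
        linarith
      · have h1 : seq k = s₀ + k * step := min_eq_left (le_of_lt hcase)
        have hklt : seq k < t₁ := by rw [h1]; exact hcase
        have hfk : c < f (seq k) := hfgt (seq k) (hseq_mem k) hklt
        obtain ⟨q', hq'⟩ := hproj (β (seq (k+1)))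
        have hstep_le : seq (k+1) - seq k ≤ step := by
          have h5 := hseq_left (k+1)
          push_cast at h5
          rw [h1]; linarith
        have hstep_nn : 0 ≤ seq (k+1) - seq k := by
          have : seq k ≤ seq (k+1) := by
            refine le_min ?_ (hseq_le k)
            rw [h1]
            have : (k:ℝ) * step ≤ ((k:ℝ)+1) * step := by nlinarith
            push_cast
            linarith
          linarith
        have hdq' : dist q q' ≤ D := by
          refine key (β (seq k)) (f (seq k) - 1/8) (β (seq k)) (β (seq (k+1)))
            (by linarith) (by simp only [dist_self]; simp only [hc_def] at hfk; linarith) ?_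
            q hq q' hq'
          have hd : dist (β (seq (k+1))) (β (seq k)) = seq (k+1) - seq k := by
            rw [hβ (seq (k+1)) (hseq_mem (k+1)) (seq k) (hseq_mem k),
              abs_of_nonneg hstep_nn]
          rw [hd]
          simp only [hc_def] at hfk
          simp only [hstep_def] at hstep_le
          linarith
        refine ⟨q', hq', ?_⟩
        have := dist_triangle p q q'
        push_cast
        push_cast at hqd
        linarith
  -- there is a minimal k₀ with s₀ + k₀ * step ≥ t₁
  have hexists : ∃ k : ℕ, t₁ ≤ s₀ + k * step := by
    obtain ⟨n, hn⟩ := exists_nat_ge ((t₁ - s₀) / step)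
    refine ⟨n, ?_⟩
    have := (div_le_iff₀ hstep_pos).mp hn
    linarith
  set k₀ : ℕ := Nat.find hexists with hk₀_def
  have hk₀ : t₁ ≤ s₀ + k₀ * step := Nat.find_spec hexists
  have hk₀ne : k₀ ≠ 0 := by
    intro hzero
    rw [hzero] at hk₀
    push_cast at hk₀
    simp only [hs₀_def] at hk₀
    linarith
  obtain ⟨m, hm⟩ : ∃ m, k₀ = m + 1 := ⟨k₀ - 1, (Nat.succ_pred_eq_of_pos (Nat.pos_of_ne_zero hk₀ne)).symm⟩
  have hmin : s₀ + m * step < t₁ := by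
    have := Nat.find_min hexists (m := m) (by omega)
    push_neg at this
    exact this
  have hseqk₀ : seq k₀ = t₁ := min_eq_right hk₀
  obtain ⟨q, hq, hqd⟩ := chain k₀
  rw [hseqk₀] at hq
  -- bound t₁
  have ht₁bound : t₁ ≤ r + dist p q + f t₁ := by
    have h1 : dist x (β t₁) = t₁ := hdx t₁ ht₁mem
    have h2 : dist x (β t₁) ≤ dist x p + dist p q + dist q (β t₁) :=
      dist_triangle4 x p q (β t₁)
    have h3 : dist q (β t₁) = f t₁ := by rw [dist_comm]; exact hq.2
    rw [h1, h3] at h2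
    exact h2
  -- derive m ≤ 3
  have hm3 : (m : ℝ) ≤ 3 := by
    by_contra hcontra
    push_neg at hcontra
    have hm4 : (4:ℝ) ≤ m := by
      have : (3:ℕ) < m := by exact_mod_cast hcontra
      have : (4:ℕ) ≤ m := this
      exact_mod_cast this
    have hqd' : dist p q ≤ ((m:ℝ) + 2) * D := by
      rw [hm] at hqd
      push_cast at hqd
      linarith
    simp only [hs₀_def, hstep_def, hc_def] at hmin hft₁
    have hDm : 4 * D ≤ (m:ℝ) * D := by
      have := mul_le_mul_of_nonneg_right hm4 hD
      linarith
    linarith [hDm, hmin, ht₁bound, hqd', hft₁]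
  have hfinal : dist p (β t₁) ≤ 7 * D + 1/2 := by
    have h2 : dist p (β t₁) ≤ dist p q + dist q (β t₁) := dist_triangle _ _ _
    have h3 : dist q (β t₁) = f t₁ := by rw [dist_comm]; exact hq.2
    have hqd' : dist p q ≤ ((m:ℝ) + 2) * D := by
      rw [hm] at hqd
      push_cast at hqd
      linarith
    have : dist p q ≤ 5 * D := by
      have := mul_le_mul_of_nonneg_right hm3 hD
      linarith
    simp only [hc_def] at hft₁
    linarith
  have := H t₁ ht₁mem
  linarith
end

section
/- Let X be a proper geodesic metric space, D ≥ 0, let α be a D-contracting geodesic in X, and set δ = 7D + 1 (so that α is δ-slim). Let x ∈ X and p ∈ π_{im α}(x). If p_t is a point on α at distance t from p, then dist(x, p_t) ≥ dist(x,p) + t − 2δ. -/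
/-! Geodesics, quasi-geodesics, projections, contracting and super-contracting
geodesics, and Morse geodesics in a metric space. -/

open Metric Set

section AuxLemmas

private lemma geodesic_continuousOn' {X : Type} [MetricSpace X] {γ : ℝ → X} {a b : ℝ}
    (h : ∀ s ∈ Set.Icc a b, ∀ t ∈ Set.Icc a b, dist (γ s) (γ t) = |s - t|) :
    ContinuousOn γ (Set.Icc a b) := by
  have h1 : LipschitzOnWith 1 γ (Set.Icc a b) := by
    apply LipschitzOnWith.of_dist_le_mul
    intro s hs t ht
    rw [h s hs t ht, Real.dist_eq, NNReal.coe_one, one_mul]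
  exact h1.continuousOn

private lemma proj_step {X : Type} [MetricSpace X] {A : Set X} {D : ℝ}
    (hAc : IsCompact A) (hAne : A.Nonempty)
    (hcon' : ∀ z r, r < infDist z A → ∀ y₁ ∈ closedBall z r, ∀ y₂ ∈ closedBall z r,
      ∀ p₁ ∈ {w ∈ A | dist y₁ w = infDist y₁ A}, ∀ p₂ ∈ {w ∈ A | dist y₂ w = infDist y₂ A},
        dist p₁ p₂ ≤ D)
    {β : ℝ → X} {L : ℝ}
    (hβ : ∀ s ∈ Set.Icc 0 L, ∀ t ∈ Set.Icc 0 L, dist (β s) (β t) = |s - t|)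
    (hβLA : β L ∈ A)
    {u : ℝ} (hu0 : 0 ≤ u) (huL : u ≤ L)
    (hg : 1/2 ≤ infDist (β u) A)
    {q : X} (hq : q ∈ A ∧ dist (β u) q = infDist (β u) A) :
    ∃ v, u + infDist (β u) A - 1/4 ≤ v ∧ v ≤ L ∧ 0 ≤ v ∧
      ∃ q', (q' ∈ A ∧ dist (β v) q' = infDist (β v) A) ∧ dist q q' ≤ 2 * D := by
  have hL0 : 0 ≤ L := hu0.trans huL
  have hβc := geodesic_continuousOn' hβ
  have huIcc : u ∈ Set.Icc (0:ℝ) L := ⟨hu0, huL⟩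
  have hLIcc : L ∈ Set.Icc (0:ℝ) L := ⟨hL0, le_refl L⟩
  have hgu_le : infDist (β u) A ≤ L - u := by
    have h1 : infDist (β u) A ≤ dist (β u) (β L) := infDist_le_dist_of_mem hβLA
    rw [hβ u huIcc L hLIcc, abs_of_nonpos (by linarith)] at h1
    linarith
  -- IVT to find balance point s'
  have hfc : ContinuousOn (fun s => (s - u) - infDist (β s) A) (Set.Icc u L) := by
    apply ContinuousOn.sub
    · exact continuousOn_id.sub continuousOn_const
    · exact (continuous_infDist_pt A).comp_continuousOn
        (hβc.mono (Set.Icc_subset_Icc hu0 (le_refl L)))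
  have h0mem : (0:ℝ) ∈ Set.Icc ((u - u) - infDist (β u) A) ((L - u) - infDist (β L) A) := by
    constructor
    · simp only [sub_self, zero_sub]
      linarith
    · rw [infDist_zero_of_mem hβLA]
      linarith
  obtain ⟨s', hs'mem, hfs'⟩ := intermediate_value_Icc huL hfc h0mem
  simp only at hfs'
  have hr : s' - u = infDist (β s') A := by linarith
  obtain ⟨hus', hs'L⟩ := hs'mem
  have hs'Icc : s' ∈ Set.Icc (0:ℝ) L := ⟨hu0.trans hus', hs'L⟩
  -- r := s' - u ≥ g/2
  have hdus' : dist (β u) (β s') = s' - u := by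
    rw [hβ u huIcc s' hs'Icc, abs_of_nonpos (by linarith)]; ring
  have hr2 : infDist (β u) A / 2 ≤ s' - u := by
    have h1 : infDist (β u) A ≤ infDist (β s') A + dist (β u) (β s') :=
      infDist_le_infDist_add_dist
    rw [hdus', ← hr] at h1
    linarith
  have hrq : (1:ℝ)/4 ≤ s' - u := by linarith
  -- v
  set v := s' + (s' - u) - 1/8 with hvdef
  have hs'r_le : s' + (s' - u) ≤ L := by
    have h1 : infDist (β s') A ≤ dist (β s') (β L) := infDist_le_dist_of_mem hβLA
    rw [hβ s' hs'Icc L hLIcc, abs_of_nonpos (by linarith)] at h1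
    rw [← hr] at h1
    linarith
  have hvL : v ≤ L := by rw [hvdef]; linarith
  have hv0 : 0 ≤ v := by rw [hvdef]; linarith
  have hvIcc : v ∈ Set.Icc (0:ℝ) L := ⟨hv0, hvL⟩
  have hu8L : u + 1/8 ≤ L := by linarith
  have hu8Icc : u + 1/8 ∈ Set.Icc (0:ℝ) L := ⟨by linarith, hu8L⟩
  -- choose projection points
  obtain ⟨q₁, hq₁A, hq₁d⟩ := hAc.exists_infDist_eq_dist hAne (β (u + 1/8))
  obtain ⟨q', hq'A, hq'd⟩ := hAc.exists_infDist_eq_dist hAne (β v)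
  -- ball 1 : center β u, radius 1/8
  have hb1 : dist q q₁ ≤ D := by
    apply hcon' (β u) (1/8) (by linarith) (β u) (mem_closedBall_self (by norm_num))
      (β (u + 1/8)) ?_ q hq q₁ ⟨hq₁A, hq₁d.symm⟩
    rw [mem_closedBall, hβ (u + 1/8) hu8Icc u huIcc,
      show u + 1/8 - u = 1/8 by ring, abs_of_nonneg (by norm_num)]
  -- ball 2 : center β s', radius (s' - u) - 1/8
  have hb2 : dist q₁ q' ≤ D := by
    apply hcon' (β s') ((s' - u) - 1/8) (by rw [← hr]; norm_num) (β (u + 1/8)) ?_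
      (β v) ?_ q₁ ⟨hq₁A, hq₁d.symm⟩ q' ⟨hq'A, hq'd.symm⟩
    · rw [mem_closedBall, hβ (u + 1/8) hu8Icc s' hs'Icc,
        abs_of_nonpos (by linarith)]
      linarith
    · rw [mem_closedBall, hβ v hvIcc s' hs'Icc, hvdef,
        show s' + (s' - u) - 1/8 - s' = (s' - u) - 1/8 by ring,
        abs_of_nonneg (by linarith)]
  refine ⟨v, by rw [hvdef]; linarith, hvL, hv0, q', ⟨hq'A, hq'd.symm⟩, ?_⟩
  calc dist q q' ≤ dist q q₁ + dist q₁ q' := dist_triangle _ _ _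
  _ ≤ 2 * D := by linarith

end AuxLemmas

/-- for a `D`-contracting geodesic `α` (with `δ = 7D + 1`),
a point `x`, a projection point `p ∈ π_{im α}(x)`, and a point `p_t` on `α`
at distance `t` from `p`, one has `dist x p_t ≥ dist x p + t - 2δ`. -/
theorem moving_away_from_projection {X : Type} [MetricSpace X]
    [ProperSpace X] (hgeo : GeodesicSpace X) (D : ℝ) (hD : 0 ≤ D)
    (α : ℝ → X) (a b : ℝ) (hab : a ≤ b)
    (hα : IsGeodesicOn α a b) (hcon : ContractingOn α a b D)
    (x : X) (p : X) (hp : p ∈ projPt (α '' Set.Icc a b) x)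
    (t : ℝ) (pt : X) (hpt : pt ∈ α '' Set.Icc a b) (hdist : dist p pt = t) :
    dist x p + t - 2 * (7 * D + 1) ≤ dist x pt := by
  obtain ⟨hpA, hpd⟩ := hp
  have hαc : ContinuousOn α (Set.Icc a b) := geodesic_continuousOn' hα
  by_contra Hc
  push_neg at Hc
  set A := α '' Set.Icc a b with hAdef
  have hAne : A.Nonempty := ⟨p, hpA⟩
  have hAc : IsCompact A := isCompact_Icc.image_of_continuousOn hαc
  have hcon' : ∀ z r, r < infDist z A → ∀ y₁ ∈ closedBall z r, ∀ y₂ ∈ closedBall z r,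
      ∀ p₁ ∈ {w ∈ A | dist y₁ w = infDist y₁ A}, ∀ p₂ ∈ {w ∈ A | dist y₂ w = infDist y₂ A},
        dist p₁ p₂ ≤ D := by
    intro z r hr
    refine hcon z r ?_
    rw [Set.disjoint_left]
    intro w hw hwA
    have h1 : infDist z A ≤ dist z w := infDist_le_dist_of_mem hwA
    rw [mem_closedBall] at hw
    rw [dist_comm] at h1
    linarith
  obtain ⟨β, hβ, hβ0, hβL⟩ := hgeo x pt
  set L := dist x pt with hLdef
  have hL0 : 0 ≤ L := dist_nonneg
  have hβLA : β L ∈ A := by rw [hβL]; exact hpt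
  have ht0 : 0 ≤ t := by rw [← hdist]; exact dist_nonneg
  have key : ∀ k : ℕ, ∃ u q, 0 ≤ u ∧ u ≤ L ∧ (q ∈ A ∧ dist (β u) q = infDist (β u) A) ∧
      dist p q ≤ 2 * ((k:ℝ) + 1) * D ∧
      2*D + 1/2 + (k:ℝ)/4 ≤ u + (t - L) - 2*((k:ℝ)+1)*D := by
    intro k
    induction k with
    | zero =>
      push_cast
      have hq0 : p ∈ A ∧ dist (β 0) p = infDist (β 0) A := by
        rw [hβ0]; exact ⟨hpA, hpd⟩
      by_cases hd : dist x p ≤ 1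
      · refine ⟨0, p, le_refl 0, hL0, hq0, ?_, ?_⟩
        · rw [dist_self]; linarith
        · linarith
      · push_neg at hd
        have hg : 1/2 ≤ infDist (β 0) A := by rw [hβ0, ← hpd]; linarith
        obtain ⟨v, hv1, hv2, hv3, q', hq', hqq'⟩ :=
          proj_step hAc hAne hcon' hβ hβLA (le_refl 0) hL0 hg hq0
        rw [hβ0, ← hpd] at hv1
        refine ⟨v, q', hv3, hv2, hq', by linarith, by linarith⟩
    | succ k ih =>
      obtain ⟨u, q, hu0, huL, hq, hpq, he⟩ := ih
      have hk : (0:ℝ) ≤ (k:ℝ) := Nat.cast_nonneg k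
      have hdistupt : dist (β u) pt = L - u := by
        rw [← hβL, hβ u ⟨hu0, huL⟩ L ⟨hL0, le_refl L⟩, abs_of_nonpos (by linarith)]
        ring
      have hge : u + (t - L) - 2*((k:ℝ)+1)*D ≤ infDist (β u) A := by
        have h1 : dist q pt ≤ dist q (β u) + dist (β u) pt := dist_triangle _ _ _
        have h2 : t ≤ dist p q + dist q pt := by
          rw [← hdist]; exact dist_triangle _ _ _
        rw [dist_comm q (β u), hq.2, hdistupt] at h1
        linarith
      have hg : 1/2 ≤ infDist (β u) A := by linarith
      obtain ⟨v, hv1, hv2, hv3, q', hq', hqq'⟩ :=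
        proj_step hAc hAne hcon' hβ hβLA hu0 huL hg hq
      refine ⟨v, q', hv3, hv2, hq', ?_, ?_⟩
      · push_cast
        calc dist p q' ≤ dist p q + dist q q' := dist_triangle _ _ _
        _ ≤ 2*((k:ℝ)+1)*D + 2*D := by linarith
        _ = 2*(((k:ℝ)+1)+1)*D := by ring
      · push_cast
        linarith
  obtain ⟨u, q, hu0, huL, hq, hpq, he⟩ := key ⌈4*L⌉₊
  have hkge : 4*L ≤ ((⌈4*L⌉₊ : ℕ) : ℝ) := Nat.le_ceil _
  have hdistupt : dist (β u) pt = L - u := by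
    rw [← hβL, hβ u ⟨hu0, huL⟩ L ⟨hL0, le_refl L⟩, abs_of_nonpos (by linarith)]
    ring
  have hge : u + (t - L) - 2*((⌈4*L⌉₊:ℝ)+1)*D ≤ infDist (β u) A := by
    have h1 : dist q pt ≤ dist q (β u) + dist (β u) pt := dist_triangle _ _ _
    have h2 : t ≤ dist p q + dist q pt := by
      rw [← hdist]; exact dist_triangle _ _ _
    rw [dist_comm q (β u), hq.2, hdistupt] at h1
    linarith
  have hgleL : infDist (β u) A ≤ L - u := by
    rw [← hdistupt]
    exact infDist_le_dist_of_mem (by rw [← hβL]; exact hβLA)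
  linarith
end

section
/- Let X be a proper geodesic metric space, D ≥ 0, let γ : [a,b] → X be a D-contracting geodesic, and set δ = 7D + 1 (so that γ is δ-slim). Let σ = γ|[s,t] be a subsegment of γ. Suppose x ∈ X and q ∈ π_{im γ}(x) with q not in the image of σ; write q = γ(c) and let u be the endpoint of σ closest to q (u = γ(s) if c < s, and u = γ(t) if c > t). Then every p ∈ π_{im σ}(x) satisfies dist(p,u) ≤ 2δ. -/
/-! Geodesics, quasi-geodesics, projections, contracting and super-contracting
geodesics, and Morse geodesics in a metric space. -/

open Metric Set

/-! Split `γ` at `s` into `γ[a,s]`, which contains the projection `γ c` of `x`, and `γ[s,b]`,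
which contains `p`. Along a geodesic from `x` to `p` some point `z` is equidistant from the two
halves, so `z` has a projection `γ c'` to `γ` with `c' ≤ s` and one `γ f` with `f` at least the
parameter `e` of `p`: either `p` itself, when `p` is also a projection of `z` to `γ[s,b]`, or
some point beyond `γ t`. Contraction at the single point `z` gives `f - c' ≤ D`, hence
`dist p (γ s) = e - s ≤ D`. The case `t < c` follows by reversing `γ`. -/

theorem image_reflect_Icc {X : Type*} (γ : ℝ → X) (a b u v : ℝ) :
    (fun r => γ (a + b - r)) '' Icc (a + b - v) (a + b - u) = γ '' Icc u v := by
  rw [show (fun r => γ (a + b - r)) = γ ∘ (a + b - ·) from rfl, image_comp,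
    image_const_sub_Icc, sub_sub_cancel, sub_sub_cancel]

section

variable {X : Type*} [MetricSpace X]

theorem IsCompact.projPt_nonempty_s11 {K : Set X} (hK : IsCompact K) (hne : K.Nonempty) (z : X) :
    (projPt K z).Nonempty := by
  obtain ⟨q, hq, hqz⟩ := hK.exists_infDist_eq_dist hne z
  exact ⟨q, hq, hqz.symm⟩

theorem projPt_subset_union_of_infDist_le {S T : Set X} {z : X}
    (h : infDist z S ≤ infDist z T) : projPt S z ⊆ projPt (S ∪ T) z := by
  rintro q ⟨hqS, hqz⟩
  refine ⟨Or.inl hqS, le_antisymm ?_ (infDist_le_dist_of_mem (Or.inl hqS))⟩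
  refine (le_infDist ⟨q, Or.inl hqS⟩).2 fun y hy => ?_
  rcases hy with hy | hy
  · exact hqz ▸ infDist_le_dist_of_mem hy
  · exact (hqz ▸ h).trans (infDist_le_dist_of_mem hy)

theorem mem_projPt_of_dist_add_dist_eq {C : Set X} {x y p : X} (hp : p ∈ projPt C x)
    (hy : dist x y + dist y p = dist x p) : p ∈ projPt C y := by
  refine ⟨hp.1, le_antisymm ?_ (infDist_le_dist_of_mem hp.1)⟩
  refine (le_infDist ⟨p, hp.1⟩).2 fun q hq => ?_
  have hpq : dist x p ≤ dist x q := hp.2 ▸ infDist_le_dist_of_mem hq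
  linarith [dist_triangle x y q]

theorem IsGeodesicOn.continuousOn {γ : ℝ → X} {a b : ℝ} (hγ : IsGeodesicOn γ a b) :
    ContinuousOn γ (Icc a b) := by
  refine Metric.continuousOn_iff.2 fun r hr ε hε => ⟨ε, hε, fun r' hr' hd => ?_⟩
  rwa [hγ r' hr' r hr, ← Real.dist_eq]

theorem IsGeodesicOn.dist_add_dist {γ : ℝ → X} {a b r : ℝ} (hγ : IsGeodesicOn γ a b)
    (hr : r ∈ Icc a b) : dist (γ a) (γ r) + dist (γ r) (γ b) = dist (γ a) (γ b) := by
  have hab : a ≤ b := hr.1.trans hr.2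
  rw [hγ a ⟨le_rfl, hab⟩ r hr, hγ r hr b ⟨hab, le_rfl⟩, hγ a ⟨le_rfl, hab⟩ b ⟨hab, le_rfl⟩,
    abs_of_nonpos (sub_nonpos.2 hr.1), abs_of_nonpos (sub_nonpos.2 hr.2),
    abs_of_nonpos (sub_nonpos.2 hab)]
  ring

theorem IsGeodesicOn.comp_reflect {γ : ℝ → X} {a b : ℝ} (hγ : IsGeodesicOn γ a b) :
    IsGeodesicOn (fun r => γ (a + b - r)) a b := by
  intro u hu v hv
  rw [hγ _ ⟨by linarith [hu.2], by linarith [hu.1]⟩ _ ⟨by linarith [hv.2], by linarith [hv.1]⟩,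
    abs_sub_comm]
  ring_nf

theorem GeodesicSpace.exists_infDist_eq (hgeo : GeodesicSpace X) {S T : Set X} {x y : X}
    (hx : infDist x S ≤ infDist x T) (hy : infDist y T ≤ infDist y S) :
    ∃ z, dist x z + dist z y = dist x y ∧ infDist z S = infDist z T := by
  obtain ⟨β, hβ, hβ0, hβy⟩ := hgeo x y
  have hφ : ContinuousOn (fun r => infDist (β r) S - infDist (β r) T) (Icc 0 (dist x y)) :=
    ((continuous_infDist_pt S).comp_continuousOn hβ.continuousOn).sub
      ((continuous_infDist_pt T).comp_continuousOn hβ.continuousOn)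
  obtain ⟨r, hr, hr0⟩ := intermediate_value_Icc dist_nonneg hφ
    (show (0 : ℝ) ∈ Icc _ _ by simp only [hβ0, hβy, mem_Icc]; constructor <;> linarith)
  refine ⟨β r, ?_, sub_eq_zero.1 hr0⟩
  simpa only [hβ0, hβy] using hβ.dist_add_dist hr

theorem ContractingOn.of_image_eq {γ γ' : ℝ → X} {a b a' b' D : ℝ}
    (hcon : ContractingOn γ a b D) (h : γ' '' Icc a' b' = γ '' Icc a b) :
    ContractingOn γ' a' b' D := by
  rwa [ContractingOn, h]

theorem ContractingOn.dist_le_of_mem_projPt {γ : ℝ → X} {a b D : ℝ}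
    (hcon : ContractingOn γ a b D) (hD : 0 ≤ D) {z p q : X}
    (hp : p ∈ projPt (γ '' Icc a b) z) (hq : q ∈ projPt (γ '' Icc a b) z) : dist p q ≤ D := by
  by_cases hz : z ∈ γ '' Icc a b
  · have hpz : dist z p = 0 := hp.2.trans (infDist_zero_of_mem hz)
    have hqz : dist z q = 0 := hq.2.trans (infDist_zero_of_mem hz)
    rw [← dist_eq_zero.1 hpz, ← dist_eq_zero.1 hqz, dist_self]
    exact hD
  · have hball : z ∈ closedBall z 0 := mem_closedBall_self le_rfl
    refine hcon z 0 ?_ z hball z hball p hp q hq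
    rwa [closedBall_zero, disjoint_singleton_left]

theorem exists_ge_mem_projPt_image_Icc {γ : ℝ → X} {s t b : ℝ}
    (hγ : ContinuousOn γ (Icc s b)) (hst : s ≤ t) (htb : t ≤ b) {z : X} {e : ℝ}
    (he : e ∈ Icc s t) (hp : γ e ∈ projPt (γ '' Icc s t) z) :
    ∃ f ∈ Icc s b, e ≤ f ∧ γ f ∈ projPt (γ '' Icc s b) z := by
  have hσ : γ '' Icc s t ⊆ γ '' Icc s b := image_mono (Icc_subset_Icc le_rfl htb)
  obtain ⟨_, hgz⟩ := (isCompact_Icc.image_of_continuousOn hγ).projPt_nonempty_s11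
    ((nonempty_Icc.2 (hst.trans htb)).image γ) z
  obtain ⟨g, hg, rfl⟩ := hgz.1
  rcases le_or_gt g t with hgt | hgt
  · refine ⟨e, ⟨he.1, he.2.trans htb⟩, le_rfl, hσ hp.1, le_antisymm ?_ ?_⟩
    · calc dist z (γ e) = infDist z (γ '' Icc s t) := hp.2
        _ ≤ dist z (γ g) := infDist_le_dist_of_mem ⟨g, ⟨hg.1, hgt⟩, rfl⟩
        _ = infDist z (γ '' Icc s b) := hgz.2
    · exact infDist_le_dist_of_mem (hσ hp.1)
  · exact ⟨g, hg, he.2.trans hgt.le, hgz⟩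

theorem dist_projPt_subsegment_le_of_le (hgeo : GeodesicSpace X) {D : ℝ} (hD : 0 ≤ D)
    {γ : ℝ → X} {a b : ℝ} (hγ : IsGeodesicOn γ a b) (hcon : ContractingOn γ a b D)
    {s t : ℝ} (has : a ≤ s) (hst : s ≤ t) (htb : t ≤ b) {x : X} {c : ℝ} (hc : c ∈ Icc a s)
    (hq : γ c ∈ projPt (γ '' Icc a b) x) {p : X} (hp : p ∈ projPt (γ '' Icc s t) x) :
    dist p (γ s) ≤ D := by
  obtain ⟨e, he, rfl⟩ := hp.1
  set A₁ := γ '' Icc a s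
  set A₂ := γ '' Icc s b
  have hA : γ '' Icc a b = A₁ ∪ A₂ := by
    rw [← image_union, Icc_union_Icc_eq_Icc has (hst.trans htb)]
  have hxA : infDist x A₁ ≤ infDist x A₂ :=
    calc infDist x A₁ ≤ dist x (γ c) := infDist_le_dist_of_mem ⟨c, hc, rfl⟩
      _ = infDist x (γ '' Icc a b) := hq.2
      _ ≤ infDist x A₂ := infDist_le_infDist_of_subset (hA ▸ subset_union_right)
          ((nonempty_Icc.2 (hst.trans htb)).image γ)
  have hpA : infDist (γ e) A₂ ≤ infDist (γ e) A₁ := by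
    rw [infDist_zero_of_mem (show γ e ∈ A₂ from ⟨e, ⟨he.1, he.2.trans htb⟩, rfl⟩)]
    exact infDist_nonneg
  obtain ⟨z, hxz, hz⟩ := hgeo.exists_infDist_eq hxA hpA
  obtain ⟨_, hc'z⟩ :=
    (isCompact_Icc.image_of_continuousOn (hγ.continuousOn.mono (Icc_subset_Icc le_rfl
      (hst.trans htb)))).projPt_nonempty_s11 ((nonempty_Icc.2 has).image γ) z
  obtain ⟨c', hc', rfl⟩ := hc'z.1
  obtain ⟨f, hf, hef, hfz⟩ := exists_ge_mem_projPt_image_Icc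
    (hγ.continuousOn.mono (Icc_subset_Icc has le_rfl)) hst htb he
    (mem_projPt_of_dist_add_dist_eq hp hxz)
  have hc'f : dist (γ c') (γ f) ≤ D := hcon.dist_le_of_mem_projPt hD
    (hA ▸ projPt_subset_union_of_infDist_le hz.le hc'z)
    (hA ▸ union_comm A₂ A₁ ▸ projPt_subset_union_of_infDist_le hz.ge hfz)
  rw [hγ c' ⟨hc'.1, hc'.2.trans (hst.trans htb)⟩ f ⟨has.trans hf.1, hf.2⟩] at hc'f
  rw [hγ e ⟨has.trans he.1, he.2.trans htb⟩ s ⟨has, hst.trans htb⟩,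
    abs_of_nonneg (sub_nonneg.2 he.1)]
  linarith [neg_abs_le (c' - f), hc'.2]

end

theorem cut_subsegment_general {X : Type} [MetricSpace X]
    (hgeo : GeodesicSpace X) (D : ℝ) (hD : 0 ≤ D)
    (γ : ℝ → X) (a b : ℝ)
    (hγ : IsGeodesicOn γ a b) (hcon : ContractingOn γ a b D)
    (s t : ℝ) (has : a ≤ s) (hst : s ≤ t) (htb : t ≤ b)
    (x : X) (c : ℝ) (hc : c ∈ Set.Icc a b)
    (hq : γ c ∈ projPt (γ '' Set.Icc a b) x) :
    ∀ p ∈ projPt (γ '' Set.Icc s t) x,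
      (c < s → dist p (γ s) ≤ 2 * (7 * D + 1)) ∧
      (t < c → dist p (γ t) ≤ 2 * (7 * D + 1)) := by
  intro p hp
  have hδ : D ≤ 2 * (7 * D + 1) := by linarith
  refine ⟨fun hcs => (dist_projPt_subsegment_le_of_le hgeo hD hγ hcon has hst htb
    ⟨hc.1, hcs.le⟩ hq hp).trans hδ, fun htc => ?_⟩
  have himg := image_reflect_Icc γ a b
  have himgab : (fun r => γ (a + b - r)) '' Icc a b = γ '' Icc a b := by
    simpa only [sub_sub_cancel_left, add_sub_cancel_right, add_sub_cancel_left] using himg a b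
  have hreflect := dist_projPt_subsegment_le_of_le hgeo hD hγ.comp_reflect
    (hcon.of_image_eq himgab) (s := a + b - t) (t := a + b - s)
    (by linarith) (by linarith) (by linarith) (x := x) (c := a + b - c)
    ⟨by linarith [hc.2], by linarith⟩ (by rw [himgab]; simpa only [sub_sub_cancel] using hq)
    (p := p) (by rwa [himg s t])
  simp only [sub_sub_cancel] at hreflect
  exact hreflect.trans hδ

/-- let `γ : [a,b] → X` be a `D`-contracting geodesic,
`δ = 7D + 1`, and `σ = γ|[s,t]` a subsegment. If `x ∈ X` has a projection
point `q = γ c ∈ π_{im γ}(x)` not on `σ`, and `u` is the endpoint of `σ`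
closest to `q` (`u = γ s` if `c < s`, `u = γ t` if `c > t`), then every
`p ∈ π_{im σ}(x)` satisfies `dist p u ≤ 2δ`. -/
theorem cut_subsegment {X : Type} [MetricSpace X]
    [ProperSpace X] (hgeo : GeodesicSpace X) (D : ℝ) (hD : 0 ≤ D)
    (γ : ℝ → X) (a b : ℝ) (hab : a ≤ b)
    (hγ : IsGeodesicOn γ a b) (hcon : ContractingOn γ a b D)
    (s t : ℝ) (has : a ≤ s) (hst : s ≤ t) (htb : t ≤ b)
    (x : X) (c : ℝ) (hc : c ∈ Set.Icc a b)
    (hq : γ c ∈ projPt (γ '' Set.Icc a b) x)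
    (hqout : γ c ∉ γ '' Set.Icc s t) :
    ∀ p ∈ projPt (γ '' Set.Icc s t) x,
      (c < s → dist p (γ s) ≤ 2 * (7 * D + 1)) ∧
      (t < c → dist p (γ t) ≤ 2 * (7 * D + 1)) :=
  cut_subsegment_general hgeo D hD γ a b hγ hcon s t has hst htb x c hc hq
end

section
/- Let X be a proper geodesic metric space, D ≥ 0, and let γ be a D-contracting geodesic in X. Set δ = 7D + 1 and D' = 26D + 4δ + 6 (so D' = 54D + 10). Then every subsegment σ of γ is D'-contracting: for every closed metric ball B disjoint from the image of σ, diam(π_{im σ}(B)) ≤ D'. Consequently, γ is D'-super-contracting. -/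
/-! Geodesics, quasi-geodesics, projections, contracting and super-contracting
geodesics, and Morse geodesics in a metric space. -/

open Metric Set

section Aux
variable {X : Type} [MetricSpace X]

theorem geo_d {γ : ℝ → X} {a b : ℝ} (hγ : IsGeodesicOn γ a b)
    {u v : ℝ} (hu : u ∈ Icc a b) (hv : v ∈ Icc a b) :
    dist (γ u) (γ v) = |u - v| := hγ u hu v hv

theorem geo_compact {γ : ℝ → X} {a b : ℝ} (hγ : IsGeodesicOn γ a b) :
    IsCompact (γ '' Icc a b) := by
  refine isCompact_Icc.image_of_continuousOn ?_
  have h : LipschitzOnWith 1 γ (Icc a b) := by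
    refine LipschitzOnWith.of_dist_le_mul fun u hu v hv => ?_
    rw [hγ u hu v hv, ← Real.dist_eq]
    simp
  exact h.continuousOn

theorem exists_proj {γ : ℝ → X} {a b : ℝ} (hγ : IsGeodesicOn γ a b) (hab : a ≤ b) (w : X) :
    ∃ u, u ∈ Icc a b ∧ γ u ∈ projPt (γ '' Icc a b) w ∧
      dist w (γ u) = infDist w (γ '' Icc a b) := by
  obtain ⟨y, hy, hyd⟩ := (geo_compact hγ).exists_infDist_eq_dist
    ⟨γ a, mem_image_of_mem γ (left_mem_Icc.2 hab)⟩ w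
  obtain ⟨u, hu, rfl⟩ := hy
  exact ⟨u, hu, ⟨mem_image_of_mem γ hu, hyd.symm⟩, hyd.symm⟩

theorem ball_disj {S : Set X} {w : X} {ρ : ℝ} (h : ρ < infDist w S) :
    Disjoint (closedBall w ρ) S := by
  rw [Set.disjoint_left]
  intro y hy hyS
  have h1 : infDist w S ≤ dist w y := infDist_le_dist_of_mem hyS
  have h2 : dist y w ≤ ρ := mem_closedBall.mp hy
  rw [dist_comm] at h2
  linarith

theorem drift {γ : ℝ → X} {a b D : ℝ} (hγ : IsGeodesicOn γ a b)
    (hcon : ContractingOn γ a b D) {w : X} {ρ : ℝ}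
    (hρ : ρ < infDist w (γ '' Icc a b))
    {x' y' : X} (hx' : x' ∈ closedBall w ρ) (hy' : y' ∈ closedBall w ρ)
    {u1 u2 : ℝ} (h1 : u1 ∈ Icc a b) (h2 : u2 ∈ Icc a b)
    (hp1 : γ u1 ∈ projPt (γ '' Icc a b) x') (hp2 : γ u2 ∈ projPt (γ '' Icc a b) y') :
    |u1 - u2| ≤ D := by
  have := hcon w ρ (ball_disj hρ) x' hx' y' hy' _ hp1 _ hp2
  rwa [geo_d hγ h1 h2] at this

theorem geo_seg {β : ℝ → X} {ℓ : ℝ} (hβ : IsGeodesicOn β 0 ℓ)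
    {ρ ρ' : ℝ} (h0 : 0 ≤ ρ) (hle : ρ ≤ ρ') (hl : ρ' ≤ ℓ) :
    dist (β ρ) (β ρ') = ρ' - ρ := by
  rw [hβ ρ ⟨h0, le_trans hle hl⟩ ρ' ⟨le_trans h0 hle, hl⟩, abs_of_nonpos (by linarith)]
  ring

theorem clamp_mem {s t w : ℝ} (hst : s ≤ t) : max s (min w t) ∈ Icc s t :=
  ⟨le_max_left _ _, max_le hst (min_le_right _ _)⟩

theorem clamp_id {s t w v : ℝ} (hst : s ≤ t) (hv : v ∈ Icc s t) :
    |w - v| = |w - max s (min w t)| + |max s (min w t) - v| := by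
  obtain ⟨hv1, hv2⟩ := hv
  rcases le_total w s with h1 | h1
  · rw [min_eq_left (le_trans h1 hst), max_eq_left h1]
    rw [abs_of_nonpos (by linarith), abs_of_nonpos (by linarith),
      abs_of_nonpos (by linarith)]
    ring
  · rcases le_total t w with h2 | h2
    · rw [min_eq_right h2, max_eq_right hst]
      rw [abs_of_nonneg (by linarith), abs_of_nonneg (by linarith),
        abs_of_nonneg (by linarith)]
      ring
    · rw [min_eq_left h2, max_eq_right h1]
      simp

theorem clamp_lip {s t w1 w2 : ℝ} : |max s (min w1 t) - max s (min w2 t)| ≤ |w1 - w2| := by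
  have key : ∀ u v : ℝ, u ≤ v →
      max s (min u t) ≤ max s (min v t) ∧ max s (min v t) - max s (min u t) ≤ v - u := by
    intro u v huv
    refine ⟨max_le_max le_rfl (min_le_min huv le_rfl), ?_⟩
    have h1 : min v t ≤ min u t + (v - u) := by
      rcases le_total u t with h | h
      · rw [min_eq_left h]
        have : min v t ≤ v := min_le_left _ _
        linarith
      · rw [min_eq_right h]
        have : min v t ≤ t := min_le_right _ _
        linarith
    have h2 : max s (min v t) ≤ max s (min u t + (v - u)) := max_le_max le_rfl h1
    have h3 : max s (min u t + (v - u)) ≤ max s (min u t) + (v - u) := by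
      apply max_le
      · have : s ≤ max s (min u t) := le_max_left _ _
        linarith
      · have : min u t ≤ max s (min u t) := le_max_right _ _
        linarith
    linarith
  rcases le_total w1 w2 with h | h
  · obtain ⟨hm, hd⟩ := key w1 w2 h
    rw [abs_of_nonpos (by linarith), abs_of_nonpos (by linarith)]
    linarith
  · obtain ⟨hm, hd⟩ := key w2 w1 h
    rw [abs_of_nonneg (by linarith), abs_of_nonneg (by linarith)]
    linarith

end Aux

section LemA
variable {X : Type} [MetricSpace X]

theorem lemA {γ : ℝ → X} {a b D σ : ℝ} (hγ : IsGeodesicOn γ a b) (hab : a ≤ b)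
    (hgeo : GeodesicSpace X) (hcon : ContractingOn γ a b D) (hD : 0 ≤ D) (hσ : 0 < σ)
    (x : X) {u v : ℝ} (hu : u ∈ Icc a b) (hpu : γ u ∈ projPt (γ '' Icc a b) x)
    (hv : v ∈ Icc a b) :
    dist x (γ u) + |u - v| ≤ dist x (γ v) + (2*D + 2*σ) := by
  obtain ⟨β, hβ, hβ0, hβl⟩ := hgeo x (γ v)
  set ℓ := dist x (γ v) with hℓ
  set R := dist x (γ u) with hR
  have hRinf : R = infDist x (γ '' Icc a b) := hpu.2
  have hℓ0 : 0 ≤ ℓ := dist_nonneg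
  -- dip conclusion
  have dipconc : ∀ ρ uw : ℝ, ∀ k : ℕ, 0 ≤ ρ → ρ ≤ ℓ → uw ∈ Icc a b →
      γ uw ∈ projPt (γ '' Icc a b) (β ρ) →
      ((k = 0 ∧ ρ = 0 ∧ uw = u) ∨
        (1 ≤ k ∧ |u - uw| ≤ (k : ℝ) * D ∧ R - σ/2 + ((k:ℝ) - 1)*(D + σ/2) ≤ ρ)) →
      infDist (β ρ) (γ '' Icc a b) ≤ D + σ →
      |u - v| ≤ ℓ - R + (2*D + 2*σ) := by
    intro ρ uw k h0 h1 h2 h3 h4 hdip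
    have hdw : dist (β ρ) (γ uw) = infDist (β ρ) (γ '' Icc a b) := h3.2
    have hlast : dist (β ρ) (γ v) = ℓ - ρ := by
      rw [← hβl]; exact geo_seg hβ h0 h1 le_rfl
    have huwv : |uw - v| ≤ (D + σ) + (ℓ - ρ) := by
      have : dist (γ uw) (γ v) ≤ dist (γ uw) (β ρ) + dist (β ρ) (γ v) := dist_triangle _ _ _
      rw [geo_d hγ h2 hv, dist_comm (γ uw) (β ρ), hdw, hlast] at this
      linarith
    rcases h4 with ⟨hk0, hρ0, huw⟩ | ⟨hk1, hinv1, hinv2⟩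
    · have hxR : infDist (β ρ) (γ '' Icc a b) = R := by rw [hρ0, hβ0, ← hRinf]
      rw [hxR] at hdip
      rw [huw, hρ0] at huwv
      linarith
    · have hk1' : (1:ℝ) ≤ (k:ℝ) := by exact_mod_cast hk1
      have habs : |u - v| ≤ |u - uw| + |uw - v| := abs_sub_le _ _ _
      have hσ2 : σ/2 ≤ (k:ℝ) * (σ/2) := le_mul_of_one_le_left (by positivity) hk1'
      have hexp : ((k:ℝ) - 1)*(D + σ/2) = (k:ℝ)*D + (k:ℝ)*(σ/2) - D - σ/2 := by ring
      linarith
  -- the walk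
  have walk : ∀ n : ℕ, ∀ ρ uw : ℝ, ∀ k : ℕ, 0 ≤ ρ → ρ ≤ ℓ → uw ∈ Icc a b →
      γ uw ∈ projPt (γ '' Icc a b) (β ρ) →
      ((k = 0 ∧ ρ = 0 ∧ uw = u) ∨
        (1 ≤ k ∧ |u - uw| ≤ (k : ℝ) * D ∧ R - σ/2 + ((k:ℝ) - 1)*(D + σ/2) ≤ ρ)) →
      ℓ - ρ ≤ n * (σ/2) →
      |u - v| ≤ ℓ - R + (2*D + 2*σ) := by
    intro n
    induction n with
    | zero =>
      intro ρ uw k h0 h1 h2 h3 h4 h5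
      by_cases hdip : infDist (β ρ) (γ '' Icc a b) ≤ D + σ
      · exact dipconc ρ uw k h0 h1 h2 h3 h4 hdip
      · exfalso
        push_neg at hdip
        have hlast : dist (β ρ) (γ v) = ℓ - ρ := by
          rw [← hβl]; exact geo_seg hβ h0 h1 le_rfl
        have : infDist (β ρ) (γ '' Icc a b) ≤ ℓ - ρ := by
          rw [← hlast]; exact infDist_le_dist_of_mem (mem_image_of_mem γ hv)
        simp only [Nat.cast_zero, zero_mul] at h5
        linarith
    | succ n IH =>
      intro ρ uw k h0 h1 h2 h3 h4 h5
      by_cases hdip : infDist (β ρ) (γ '' Icc a b) ≤ D + σ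
      · exact dipconc ρ uw k h0 h1 h2 h3 h4 hdip
      · push_neg at hdip
        set h := infDist (β ρ) (γ '' Icc a b) with hh
        have hlast : dist (β ρ) (γ v) = ℓ - ρ := by
          rw [← hβl]; exact geo_seg hβ h0 h1 le_rfl
        have hhle : h ≤ ℓ - ρ := by
          rw [← hlast]; exact infDist_le_dist_of_mem (mem_image_of_mem γ hv)
        set ρ' := ρ + (h - σ/2) with hρ'
        have hρ'0 : 0 ≤ ρ' := by
          have hh0 : 0 < h := by linarith
          simp only [hρ']
          linarith
        have hρ'l : ρ' ≤ ℓ := by simp only [hρ']; linarith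
        obtain ⟨u', hu', hpu', _⟩ := exists_proj hγ hab (β ρ')
        have hmem1 : β ρ ∈ closedBall (β ρ) (h - σ/2) := by
          simp [mem_closedBall]; linarith
        have hmem2 : β ρ' ∈ closedBall (β ρ) (h - σ/2) := by
          rw [mem_closedBall, dist_comm]
          rw [geo_seg hβ h0 (by simp only [hρ']; linarith) hρ'l]
          simp only [hρ']; linarith
        have hdr : |uw - u'| ≤ D :=
          drift hγ hcon (by rw [← hh]; linarith) hmem1 hmem2 h2 hu' h3 hpu'
        have hnewinv : (k + 1 = 0 ∧ ρ' = 0 ∧ u' = u) ∨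
            (1 ≤ k + 1 ∧ |u - u'| ≤ ((k + 1 : ℕ) : ℝ) * D ∧
              R - σ/2 + (((k + 1 : ℕ) : ℝ) - 1)*(D + σ/2) ≤ ρ') := by
          right
          refine ⟨Nat.le_add_left 1 k, ?_, ?_⟩
          · rcases h4 with ⟨hk0, hρ0, huw⟩ | ⟨hk1, hinv1, hinv2⟩
            · rw [huw] at hdr
              push_cast
              calc |u - u'| ≤ D := hdr
                _ ≤ ((k:ℝ)+1) * D := by
                    have : (0:ℝ) ≤ (k:ℝ) := Nat.cast_nonneg k
                    nlinarith
            · have : |u - u'| ≤ |u - uw| + |uw - u'| := abs_sub_le _ _ _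
              push_cast
              linarith
          · rcases h4 with ⟨hk0, hρ0, huw⟩ | ⟨hk1, hinv1, hinv2⟩
            · have hxR : h = R := by rw [hh, hρ0, hβ0, ← hRinf]
              subst hk0
              simp only [hρ', hxR, hρ0]
              norm_num
            · push_cast
              have hexp : ((k:ℝ) + 1 - 1)*(D + σ/2) = ((k:ℝ) - 1)*(D + σ/2) + (D + σ/2) := by
                ring
              simp only [hρ']
              linarith
        have hmeas : ℓ - ρ' ≤ n * (σ/2) := by
          push_cast at h5
          simp only [hρ']
          linarith
        exact IH ρ' u' (k+1) hρ'0 hρ'l hu' hpu' hnewinv hmeas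
  -- apply the walk
  have hn : ℓ ≤ (⌈ℓ/(σ/2)⌉₊ : ℝ) * (σ/2) := by
    have h1 : ℓ/(σ/2) ≤ (⌈ℓ/(σ/2)⌉₊ : ℝ) := Nat.le_ceil _
    have h2 : (0:ℝ) < σ/2 := by linarith
    calc ℓ = (ℓ/(σ/2)) * (σ/2) := by field_simp
      _ ≤ (⌈ℓ/(σ/2)⌉₊ : ℝ) * (σ/2) := by
          apply mul_le_mul_of_nonneg_right h1 (le_of_lt h2)
  have hproj0 : γ u ∈ projPt (γ '' Icc a b) (β 0) := by rw [hβ0]; exact hpu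
  have := walk ⌈ℓ/(σ/2)⌉₊ 0 u 0 le_rfl hℓ0 hu hproj0 (Or.inl ⟨rfl, rfl, rfl⟩)
    (by simpa using hn)
  linarith

end LemA

section LemML
variable {X : Type} [MetricSpace X]

theorem lemML {γ : ℝ → X} {a b D σ : ℝ} (hγ : IsGeodesicOn γ a b) (hab : a ≤ b)
    (hgeo : GeodesicSpace X) (hcon : ContractingOn γ a b D) (hD : 0 ≤ D) (hσ : 0 < σ)
    (x z : X) {uh vh : ℝ} (huh : uh ∈ Icc a b) (hpx : γ uh ∈ projPt (γ '' Icc a b) x)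
    (hvh : vh ∈ Icc a b) (hpz : γ vh ∈ projPt (γ '' Icc a b) z) :
    |uh - vh| ≤ 2*D ∨
      dist x (γ uh) + dist z (γ vh) + |uh - vh| ≤ dist x z + (5*D + 6*σ) := by
  set L := dist x z with hL
  set Rx := dist x (γ uh) with hRx
  set Rz := dist z (γ vh) with hRz
  have hRxinf : Rx = infDist x (γ '' Icc a b) := hpx.2
  have hRzinf : Rz = infDist z (γ '' Icc a b) := hpz.2
  have hL0 : 0 ≤ L := dist_nonneg
  by_cases hc1 : L ≤ Rz - σ
  · -- x is inside the private ball of z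
    left
    have hball : Rz - σ < infDist z (γ '' Icc a b) := by rw [← hRzinf]; linarith
    have hxmem : x ∈ closedBall z (Rz - σ) := by
      rw [mem_closedBall]
      exact le_trans (le_of_eq hL.symm) hc1
    have hzmem : z ∈ closedBall z (Rz - σ) := by
      rw [mem_closedBall, dist_self]; linarith
    have := drift hγ hcon hball hxmem hzmem huh hvh hpx hpz
    linarith
  · push_neg at hc1
    obtain ⟨β, hβ, hβ0, hβl⟩ := hgeo x z
    rw [← hL] at hβ hβl
    set P := min L (L - Rz + σ) with hP
    have hP0 : 0 ≤ P := le_min hL0 (by linarith)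
    have hPL : P ≤ L := min_le_left _ _
    have hPz : Rz - σ ≤ L - P := by
      rw [hP]
      rcases le_total L (L - Rz + σ) with hmin | hmin
      · rw [min_eq_left hmin]
        have hRz0 : 0 ≤ Rz := dist_nonneg
        linarith
      · rw [min_eq_right hmin]; linarith
    -- the point ξ := β P and its projection
    have hxi : ∃ uξ, uξ ∈ Icc a b ∧ γ uξ ∈ projPt (γ '' Icc a b) (β P) ∧ |uξ - vh| ≤ D := by
      rcases le_or_gt σ Rz with hs | hs
      · have hPe : P = L - Rz + σ := by rw [hP]; exact min_eq_right (by linarith)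
        obtain ⟨uξ, hx1, hx2, _⟩ := exists_proj hγ hab (β P)
        refine ⟨uξ, hx1, hx2, ?_⟩
        have hdPz : dist (β P) z = Rz - σ := by
          rw [← hβl, geo_seg hβ hP0 hPL le_rfl, hPe]; ring
        have hball : Rz - σ < infDist z (γ '' Icc a b) := by rw [← hRzinf]; linarith
        have hm1 : β P ∈ closedBall z (Rz - σ) := by
          rw [mem_closedBall, hdPz]
        have hm2 : z ∈ closedBall z (Rz - σ) := by
          rw [mem_closedBall, dist_self]; linarith
        exact drift hγ hcon hball hm1 hm2 hx1 hvh hx2 hpz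
      · have hPe : P = L := by rw [hP]; exact min_eq_left (by linarith)
        refine ⟨vh, hvh, ?_, by simpa using hD⟩
        rw [hPe, hβl]; exact hpz
    obtain ⟨uξ, hxi1, hxi2, hxi3⟩ := hxi
    -- dip conclusion
    have dipconc : ∀ ρ uw : ℝ, 0 ≤ ρ → ρ ≤ P → uw ∈ Icc a b →
        γ uw ∈ projPt (γ '' Icc a b) (β ρ) →
        infDist (β ρ) (γ '' Icc a b) ≤ σ →
        Rx + Rz + |uh - vh| ≤ L + (5*D + 6*σ) := by
      intro ρ uw h0 h1 h2 h3 hdip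
      have hdw : dist (β ρ) (γ uw) = infDist (β ρ) (γ '' Icc a b) := h3.2
      have hdx : dist x (β ρ) = ρ := by
        rw [← hβ0]; simpa using geo_seg hβ le_rfl h0 (le_trans h1 hPL)
      have hdz : dist (β ρ) z = L - ρ := by
        rw [← hβl]; exact geo_seg hβ h0 (le_trans h1 hPL) le_rfl
      have hxuw : dist x (γ uw) ≤ ρ + σ := by
        calc dist x (γ uw) ≤ dist x (β ρ) + dist (β ρ) (γ uw) := dist_triangle _ _ _
          _ ≤ ρ + σ := by rw [hdx, hdw]; linarith
      have hzuw : dist z (γ uw) ≤ (L - ρ) + σ := by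
        calc dist z (γ uw) ≤ dist z (β ρ) + dist (β ρ) (γ uw) := dist_triangle _ _ _
          _ ≤ (L - ρ) + σ := by rw [dist_comm z (β ρ), hdz, hdw]; linarith
      have hA1 := lemA hγ hab hgeo hcon hD hσ x huh hpx h2
      have hA2 := lemA hγ hab hgeo hcon hD hσ z hvh hpz h2
      have habs : |uh - vh| ≤ |uh - uw| + |vh - uw| := by
        rw [abs_sub_comm vh uw]
        exact abs_sub_le _ _ _
      rw [← hRx] at hA1
      rw [← hRz] at hA2
      linarith
    -- meet conclusion
    have meetconc : ∀ ρ uw : ℝ, 0 ≤ ρ → ρ ≤ P → uw ∈ Icc a b →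
        γ uw ∈ projPt (γ '' Icc a b) (β ρ) →
        ((ρ = 0 ∧ uw = uh) ∨ Rx + |uh - uw| - (2*D + 2*σ) - D - σ/2 ≤ ρ) →
        σ < infDist (β ρ) (γ '' Icc a b) →
        P - ρ ≤ infDist (β ρ) (γ '' Icc a b) - σ/2 →
        (|uh - vh| ≤ 2*D ∨ Rx + Rz + |uh - vh| ≤ L + (5*D + 6*σ)) := by
      intro ρ uw h0 h1 h2 h3 h4 hnd hm
      set h := infDist (β ρ) (γ '' Icc a b) with hh
      have hmem1 : β ρ ∈ closedBall (β ρ) (h - σ/2) := by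
        rw [mem_closedBall, dist_self]; linarith
      have hmem2 : β P ∈ closedBall (β ρ) (h - σ/2) := by
        rw [mem_closedBall, dist_comm, geo_seg hβ h0 h1 hPL]
        linarith
      have hdr : |uw - uξ| ≤ D :=
        drift hγ hcon (by rw [← hh]; linarith) hmem1 hmem2 h2 hxi1 h3 hxi2
      rcases h4 with ⟨hρ0, huw⟩ | hinv
      · left
        calc |uh - vh| ≤ |uh - uξ| + |uξ - vh| := abs_sub_le _ _ _
          _ ≤ 2*D := by
              rw [← huw]
              linarith [hdr]
      · right
        have hgapb : |uh - vh| ≤ |uh - uw| + 2*D := by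
          have t1 : |uh - vh| ≤ |uh - uw| + |uw - vh| := abs_sub_le _ _ _
          have t2 : |uw - vh| ≤ |uw - uξ| + |uξ - vh| := abs_sub_le _ _ _
          linarith
        linarith
    -- the walk
    have walk : ∀ n : ℕ, ∀ ρ uw : ℝ, 0 ≤ ρ → ρ ≤ P → uw ∈ Icc a b →
        γ uw ∈ projPt (γ '' Icc a b) (β ρ) →
        ((ρ = 0 ∧ uw = uh) ∨ Rx + |uh - uw| - (2*D + 2*σ) - D - σ/2 ≤ ρ) →
        P - ρ ≤ n * (σ/2) →
        (|uh - vh| ≤ 2*D ∨ Rx + Rz + |uh - vh| ≤ L + (5*D + 6*σ)) := by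
      intro n
      induction n with
      | zero =>
        intro ρ uw h0 h1 h2 h3 h4 h5
        by_cases hdip : infDist (β ρ) (γ '' Icc a b) ≤ σ
        · exact Or.inr (dipconc ρ uw h0 h1 h2 h3 hdip)
        · push_neg at hdip
          refine meetconc ρ uw h0 h1 h2 h3 h4 hdip ?_
          simp only [Nat.cast_zero, zero_mul] at h5
          linarith
      | succ n IH =>
        intro ρ uw h0 h1 h2 h3 h4 h5
        by_cases hdip : infDist (β ρ) (γ '' Icc a b) ≤ σ
        · exact Or.inr (dipconc ρ uw h0 h1 h2 h3 hdip)
        · push_neg at hdip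
          set h := infDist (β ρ) (γ '' Icc a b) with hh
          by_cases hm : P - ρ ≤ h - σ/2
          · exact meetconc ρ uw h0 h1 h2 h3 h4 hdip hm
          · push_neg at hm
            set ρ' := ρ + (h - σ/2) with hρ'
            have hρ'0 : 0 ≤ ρ' := by simp only [hρ']; linarith
            have hρ'P : ρ' ≤ P := by simp only [hρ']; linarith
            obtain ⟨u', hu', hpu', _⟩ := exists_proj hγ hab (β ρ')
            have hmem1 : β ρ ∈ closedBall (β ρ) (h - σ/2) := by
              rw [mem_closedBall, dist_self]; linarith
            have hmem2 : β ρ' ∈ closedBall (β ρ) (h - σ/2) := by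
              rw [mem_closedBall, dist_comm,
                geo_seg hβ h0 (by simp only [hρ']; linarith) (le_trans hρ'P hPL)]
              simp only [hρ']; linarith
            have hdr : |uw - u'| ≤ D :=
              drift hγ hcon (by rw [← hh]; linarith) hmem1 hmem2 h2 hu' h3 hpu'
            have hdx : dist x (β ρ) = ρ := by
              rw [← hβ0]; simpa using geo_seg hβ le_rfl h0 (le_trans h1 hPL)
            have htri : dist x (γ uw) ≤ ρ + h := by
              calc dist x (γ uw) ≤ dist x (β ρ) + dist (β ρ) (γ uw) := dist_triangle _ _ _
                _ ≤ ρ + h := by rw [hdx, h3.2]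
            have hA1 := lemA hγ hab hgeo hcon hD hσ x huh hpx h2
            rw [← hRx] at hA1
            have hnewinv : (ρ' = 0 ∧ u' = uh) ∨
                Rx + |uh - u'| - (2*D + 2*σ) - D - σ/2 ≤ ρ' := by
              right
              have habs : |uh - u'| ≤ |uh - uw| + D := by
                have := abs_sub_le uh uw u'
                linarith
              simp only [hρ']
              linarith
            have hmeas : P - ρ' ≤ n * (σ/2) := by
              push_cast at h5
              simp only [hρ']
              linarith
            exact IH ρ' u' hρ'0 hρ'P hu' hpu' hnewinv hmeas
    -- run the walk
    have hn : P ≤ (⌈P/(σ/2)⌉₊ : ℝ) * (σ/2) := by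
      have h1 : P/(σ/2) ≤ (⌈P/(σ/2)⌉₊ : ℝ) := Nat.le_ceil _
      have h2 : (0:ℝ) < σ/2 := by linarith
      calc P = (P/(σ/2)) * (σ/2) := by field_simp
        _ ≤ (⌈P/(σ/2)⌉₊ : ℝ) * (σ/2) := mul_le_mul_of_nonneg_right h1 (le_of_lt h2)
    have hproj0 : γ uh ∈ projPt (γ '' Icc a b) (β 0) := by rw [hβ0]; exact hpx
    have := walk ⌈P/(σ/2)⌉₊ 0 uh le_rfl hP0 huh hproj0 (Or.inl ⟨rfl, rfl⟩)
      (by simpa using hn)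
    exact this

end LemML

section PerPoint
variable {X : Type} [MetricSpace X]

theorem perpoint {γ : ℝ → X} {a b D σ s t r : ℝ} {z x : X}
    (hγ : IsGeodesicOn γ a b) (hab : a ≤ b)
    (hgeo : GeodesicSpace X) (hcon : ContractingOn γ a b D) (hD : 0 ≤ D) (hσ : 0 < σ)
    (has : a ≤ s) (hst : s ≤ t) (htb : t ≤ b)
    (hdisj : Disjoint (closedBall z r) (γ '' Icc s t))
    (hx : x ∈ closedBall z r)
    {up vh : ℝ} (hup : up ∈ Icc s t) (hpp : γ up ∈ projPt (γ '' Icc s t) x)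
    (hvh : vh ∈ Icc a b) (hpv : γ vh ∈ projPt (γ '' Icc a b) z) :
    |up - max s (min vh t)| ≤ 7*D + 8*σ := by
  have hsub : Icc s t ⊆ Icc a b := Icc_subset_Icc has htb
  obtain ⟨uh, huhm, hpuh, _⟩ := exists_proj hγ hab x
  set cx := max s (min uh t) with hcx
  set A := max s (min vh t) with hA
  have hcxm : cx ∈ Icc s t := clamp_mem hst
  have hAm : A ∈ Icc s t := clamp_mem hst
  -- Step 1: |cx - up| ≤ 2D + 2σ
  have step1 : |cx - up| ≤ 2*D + 2*σ := by
    have h1 := lemA hγ hab hgeo hcon hD hσ x huhm hpuh (hsub hup)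
    have hid : |uh - up| = |uh - cx| + |cx - up| := clamp_id hst hup
    have h2 : dist x (γ up) ≤ dist x (γ cx) := by
      rw [hpp.2]
      exact infDist_le_dist_of_mem (mem_image_of_mem γ hcxm)
    have h3 : dist x (γ cx) ≤ dist x (γ uh) + |uh - cx| := by
      calc dist x (γ cx) ≤ dist x (γ uh) + dist (γ uh) (γ cx) := dist_triangle _ _ _
        _ = dist x (γ uh) + |uh - cx| := by rw [geo_d hγ huhm (hsub hcxm)]
    linarith
  -- Step 2: |cx - A| ≤ 5D + 6σ
  have step2 : |cx - A| ≤ 5*D + 6*σ := by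
    by_cases hBG : Disjoint (closedBall z r) (γ '' Icc a b)
    · have hr0 : 0 ≤ r := le_trans dist_nonneg (mem_closedBall.mp hx)
      have hzc : z ∈ closedBall z r := by rw [mem_closedBall, dist_self]; exact hr0
      have hd := hcon z r hBG x hx z hzc _ hpuh _ hpv
      rw [geo_d hγ huhm hvh] at hd
      calc |cx - A| ≤ |uh - vh| := clamp_lip
        _ ≤ D := hd
        _ ≤ 5*D + 6*σ := by linarith
    · obtain ⟨w, hw1, hw2⟩ := Set.not_disjoint_iff.mp hBG
      obtain ⟨v0, hv0, rfl⟩ := hw2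
      set Rz := dist z (γ vh) with hRz
      have hRzinf : Rz = infDist z (γ '' Icc a b) := hpv.2
      have hRzr : Rz ≤ r := by
        rw [hRzinf]
        calc infDist z (γ '' Icc a b) ≤ dist z (γ v0) :=
              infDist_le_dist_of_mem (mem_image_of_mem γ hv0)
          _ ≤ r := by rw [dist_comm]; exact mem_closedBall.mp hw1
      have hfar : ∀ m, m ∈ Icc s t → r < dist z (γ m) := by
        intro m hm
        by_contra hcon'
        push_neg at hcon'
        have hmem : γ m ∈ closedBall z r := by rw [mem_closedBall, dist_comm]; exact hcon'
        exact Set.disjoint_left.mp hdisj hmem (mem_image_of_mem γ hm)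
      have hAfar : r - Rz < |vh - A| := by
        have h1 := hfar A hAm
        have h2 : dist z (γ A) ≤ Rz + |vh - A| := by
          calc dist z (γ A) ≤ dist z (γ vh) + dist (γ vh) (γ A) := dist_triangle _ _ _
            _ = Rz + |vh - A| := by rw [geo_d hγ hvh (hsub hAm)]
        linarith
      have hvout : t < vh ∨ vh < s := by
        by_contra hcon'
        push_neg at hcon'
        obtain ⟨hv1, hv2⟩ := hcon'
        have : A = vh := by rw [hA, min_eq_left hv1, max_eq_right hv2]
        rw [this] at hAfar
        simp at hAfar
        linarith
      have hLr : dist x z ≤ r := mem_closedBall.mp hx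
      have hRx0 : (0:ℝ) ≤ dist x (γ uh) := dist_nonneg
      rcases hvout with hgt | hlt
      · -- vh > t, anchor = t
        have hAt : A = t := by rw [hA, min_eq_right hgt.le, max_eq_right hst]
        have hvt : r - Rz < vh - t := by
          rw [hAt, abs_of_nonneg (by linarith)] at hAfar
          linarith
        by_cases hut : t ≤ uh
        · have hcxt : cx = t := by rw [hcx, min_eq_right hut, max_eq_right hst]
          rw [hcxt, hAt]
          simp
          linarith
        · push_neg at hut
          have hcxle : cx ≤ t := hcxm.2
          have hcxge : uh ≤ cx := by
            rw [hcx, min_eq_left hut.le]; exact le_max_right _ _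
          have hgap : |uh - vh| = vh - uh := by
            rw [abs_of_nonpos (by linarith)]; ring
          have hml := lemML hγ hab hgeo hcon hD hσ x z huhm hpuh hvh hpv
          have hbnd : t - uh ≤ 5*D + 6*σ := by
            rcases hml with hsmall | hbig
            · rw [hgap] at hsmall
              linarith
            · rw [hgap, ← hRz] at hbig
              linarith
          rw [hAt, abs_of_nonpos (by linarith)]
          linarith
      · -- vh < s, anchor = s
        have hAs : A = s := by
          rw [hA, min_eq_left (le_trans hlt.le hst), max_eq_left hlt.le]
        have hvs : r - Rz < s - vh := by
          rw [hAs, abs_of_nonpos (by linarith)] at hAfar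
          linarith
        by_cases hus : uh ≤ s
        · have hcxs : cx = s := by
            rw [hcx, min_eq_left (le_trans hus hst), max_eq_left hus]
          rw [hcxs, hAs]
          simp
          linarith
        · push_neg at hus
          have hcxge : s ≤ cx := hcxm.1
          have hcxle : cx ≤ uh := by
            rw [hcx]
            exact max_le (le_of_lt hus) (min_le_left _ _)
          have hgap : |uh - vh| = uh - vh := by
            rw [abs_of_nonneg (by linarith)]
          have hml := lemML hγ hab hgeo hcon hD hσ x z huhm hpuh hvh hpv
          have hbnd : uh - s ≤ 5*D + 6*σ := by
            rcases hml with hsmall | hbig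
            · rw [hgap] at hsmall
              linarith
            · rw [hgap, ← hRz] at hbig
              linarith
          rw [hAs, abs_of_nonneg (by linarith)]
          linarith
  calc |up - A| ≤ |up - cx| + |cx - A| := abs_sub_le _ _ _
    _ ≤ (2*D + 2*σ) + (5*D + 6*σ) := by
        rw [abs_sub_comm up cx]
        linarith
    _ = 7*D + 8*σ := by ring

end PerPoint


/-- if `γ` is a `D`-contracting geodesic in a proper geodesic
metric space, then with `δ = 7D + 1` and `D' = 26D + 4δ + 6`, every subsegment
of `γ` is `D'`-contracting; that is, `γ` is `D'`-super-contracting. -/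
theorem subsegments_are_contracting {X : Type} [MetricSpace X]
    [ProperSpace X] (hgeo : GeodesicSpace X) (D : ℝ) (hD : 0 ≤ D)
    (γ : ℝ → X) (a b : ℝ) (hab : a ≤ b)
    (hγ : IsGeodesicOn γ a b) (hcon : ContractingOn γ a b D) :
    SuperContractingOn γ a b (26 * D + 4 * (7 * D + 1) + 6) := by
  intro s t has hst htb
  intro z r hdisj x hx y hy p hp q hq
  have hsub : Icc s t ⊆ Icc a b := Icc_subset_Icc has htb
  obtain ⟨up, hupm, hup_eq⟩ := hp.1
  obtain ⟨uq, huqm, huq_eq⟩ := hq.1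
  obtain ⟨vh, hvhm, hpv, _⟩ := exists_proj hγ hab z
  have hppt : γ up ∈ projPt (γ '' Icc s t) x := by rw [hup_eq]; exact hp
  have hqpt : γ uq ∈ projPt (γ '' Icc s t) y := by rw [huq_eq]; exact hq
  have hdpq : dist p q = |up - uq| := by
    rw [← hup_eq, ← huq_eq]
    exact geo_d hγ (hsub hupm) (hsub huqm)
  have key : ∀ σ : ℝ, 0 < σ → dist p q ≤ 14*D + 16*σ := by
    intro σ hσ
    have h1 := perpoint hγ hab hgeo hcon hD hσ has hst htb hdisj hx hupm hppt hvhm hpv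
    have h2 := perpoint hγ hab hgeo hcon hD hσ has hst htb hdisj hy huqm hqpt hvhm hpv
    have h3 : |up - uq| ≤ |up - max s (min vh t)| + |max s (min vh t) - uq| :=
      abs_sub_le _ _ _
    rw [hdpq]
    rw [abs_sub_comm (max s (min vh t)) uq] at h3
    linarith
  have hfin : dist p q ≤ 14*D := by
    refine le_of_forall_pos_le_add fun ε hε => ?_
    have := key (ε/16) (by linarith)
    linarith
  linarith
end

section
/- Let G = ⟨a,b,c ∣ aba⁻¹b⁻¹⟩ (the free product ℤ² * ℤ presented on generators a, b, c with the single relator [a,b]) and let Σ be the six-letter alphabet consisting of the images in G of a, b, c and their inverses. Let h_n be the number of geodesic words of length n over Σ in which every occurrence of a letter from {a, a⁻¹, b, b⁻¹} that is not the last letter of the word is immediately followed by c or c⁻¹. Then h₀ = 1, h₁ = 6, h₂ = 18, and h_n = h_{n−1} + 8·h_{n−2} for all n ≥ 3. Equivalently, the generating function ∑ h_n tⁿ equals (4t² + 5t + 1)/(1 − t − 8t²). -/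
/-! The group `G = ⟨a,b,c ∣ aba⁻¹b⁻¹⟩ ≅ ℤ² * ℤ`, its six-letter alphabet of
generators and inverses, word length, and geodesic words. -/

/-- The single relator `[a,b] = a b a⁻¹ b⁻¹` in the free group on `a,b,c`. -/
def theRels : Set (FreeGroup (Fin 3)) :=
  {FreeGroup.of 0 * FreeGroup.of 1 * (FreeGroup.of 0)⁻¹ * (FreeGroup.of 1)⁻¹}

/-- The group `G = ⟨a,b,c ∣ aba⁻¹b⁻¹⟩`. -/
abbrev Gp : Type := PresentedGroup theRels

/-- The six-letter alphabet `Σ ⊆ G`: the images of `a, b, c` and their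
inverses. -/
def letters : Set Gp :=
  {x | ∃ i : Fin 3, x = PresentedGroup.of i ∨ x = (PresentedGroup.of i)⁻¹}

/-- The word length `|g|`: the minimum length of a list over `Σ` whose product
is `g`. -/
noncomputable def wl (g : Gp) : ℕ :=
  sInf {n | ∃ l : List Gp, (∀ x ∈ l, x ∈ letters) ∧ l.prod = g ∧ l.length = n}

/-- A word over `Σ` is geodesic if the word length of its product equals its
length. -/
def IsGeodesicWord (w : List Gp) : Prop :=
  (∀ x ∈ w, x ∈ letters) ∧ wl w.prod = w.length

/-- The sub-alphabet `{a, a⁻¹, b, b⁻¹}`. -/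
def abLetters : Set Gp :=
  {x | ∃ i : Fin 2, x = PresentedGroup.of (Fin.castSucc i) ∨
    x = (PresentedGroup.of (Fin.castSucc i))⁻¹}

/-- The sub-alphabet `{c, c⁻¹}`. -/
def cLetters : Set Gp :=
  {x | x = PresentedGroup.of (2 : Fin 3) ∨ x = (PresentedGroup.of (2 : Fin 3))⁻¹}

/-- Every occurrence of a letter from `{a, a⁻¹, b, b⁻¹}` that is not the last
letter of `w` is immediately followed by `c` or `c⁻¹`. -/
def ABFollowedByC (w : List Gp) : Prop :=
  ∀ k : ℕ, k + 1 < w.length → w.getD k 1 ∈ abLetters → w.getD (k + 1) 1 ∈ cLetters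

/-!
`G` maps onto the free product `ℤ² * ℤ` (`a, b` into the first factor, `c` into the second).
Summing the ℓ¹-norms of the syllables of the reduced form of the image gives a function on `G`
that changes by at most one under multiplication by a letter, hence a lower bound for `|g|`.
If consecutive letters of a word lie in different factors or are equal, the syllables of its
image are exactly its maximal powers of a single letter, so the bound is attained and the word
is geodesic. The words counted by `h_n` are precisely those in which an `a^{±1}, b^{±1}` is
followed by `c^{±1}` and no `c^{±1}` is followed by its inverse; they are the walks of a
six-state automaton, and its transfer matrix yields the recurrence.
-/

namespace Monoid.CoprodI.Word

variable {ι : Type*} {M : ι → Type*} [∀ i, Monoid (M i)]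

def weight (N : ∀ i, M i → ℕ) (w : Word M) : ℕ := (w.toList.map fun p => N p.1 p.2).sum

variable {N : ∀ i, M i → ℕ} {i : ι}

@[simp]
theorem weight_empty : weight N (empty : Word M) = 0 := rfl

variable [∀ i, DecidableEq (M i)]

theorem weight_rcons (hN : N i 1 = 0) (p : Pair M i) :
    weight N (rcons p) = N i p.head + weight N p.tail := by
  unfold rcons
  split_ifs with h
  · rw [h, hN, zero_add]
  · simp [weight, cons]

variable [DecidableEq ι]

theorem weight_of_smul_add (hN : N i 1 = 0) (m : M i) (w : Word M) :
    weight N (of m • w) + N i (equivPair i w).head =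
      N i (m * (equivPair i w).head) + weight N w := by
  have hw : weight N w = N i (equivPair i w).head + weight N (equivPair i w).tail := by
    conv_lhs => rw [← (equivPair i).symm_apply_apply w, equivPair_symm, weight_rcons hN]
  rw [of_smul_def, weight_rcons hN, hw]
  ring

theorem weight_of_smul_le (hN : N i 1 = 0) (hmul : ∀ a b, N i (a * b) ≤ N i a + N i b)
    (m : M i) (w : Word M) : weight N (of m • w) ≤ N i m + weight N w := by
  have := weight_of_smul_add hN m w
  have := hmul m (equivPair i w).head
  omega

theorem head_equivPair_of_smul_of_ne {j : ι} (hji : j ≠ i) {m : M i} {w : Word M}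
    (hm : m * (equivPair i w).head ≠ 1) : (equivPair j (of m • w)).head = 1 := by
  rw [of_smul_def, rcons, dif_neg hm, equivPair_eq_of_fstIdx_ne]
  simpa using hji.symm

theorem equiv_one : equiv (1 : CoprodI M) = empty := one_smul (CoprodI M) (empty : Word M)

theorem equiv_mul (g h : CoprodI M) : equiv (g * h) = g • equiv h :=
  mul_smul g h (empty : Word M)

theorem equivPair_equiv_one_head : (equivPair i (equiv (1 : CoprodI M))).head = 1 := by
  rw [equiv_one, equivPair_eq_of_fstIdx_ne]
  simp [fstIdx, empty]

section Chains

variable {α : Type*} {fac : α → ι} {syl : ∀ x, M (fac x)}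

theorem exists_head_equivPair_eq_pow (hpow : ∀ x (k : ℕ), N (fac x) (syl x ^ k) = k) :
    ∀ (l : List α) (x : α), (x :: l).IsChain (fun x y => fac x ≠ fac y ∨ x = y) →
      ∃ k : ℕ, (equivPair (fac x) (equiv (l.map fun y => of (syl y)).prod)).head = syl x ^ k
  | [], _, _ => ⟨0, by rw [pow_zero, List.map_nil, List.prod_nil, equivPair_equiv_one_head]⟩
  | y :: l, x, hl => by
    obtain ⟨hxy, hl⟩ := List.isChain_cons_cons.mp hl
    obtain ⟨k, hk⟩ := exists_head_equivPair_eq_pow hpow l y hl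
    rw [List.map_cons, List.prod_cons, equiv_mul]
    rcases hxy with hne | rfl
    · refine ⟨0, ?_⟩
      rw [pow_zero]
      refine head_equivPair_of_smul_of_ne hne fun h1 => ?_
      rw [hk, ← pow_succ'] at h1
      have := hpow y (k + 1)
      rw [h1, ← pow_zero (syl y), hpow] at this
      omega
    · exact ⟨k + 1, by rw [equivPair_smul_same, hk, pow_succ']⟩

theorem weight_equiv_prod_of_isChain (hpow : ∀ x (k : ℕ), N (fac x) (syl x ^ k) = k) :
    ∀ l : List α, l.IsChain (fun x y => fac x ≠ fac y ∨ x = y) →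
      weight N (equiv (l.map fun y => of (syl y)).prod) = l.length
  | [], _ => by simp [equiv_one]
  | x :: l, hl => by
    obtain ⟨k, hk⟩ := exists_head_equivPair_eq_pow hpow l x hl
    have hN : N (fac x) 1 = 0 := by simpa using hpow x 0
    have := weight_of_smul_add hN (syl x) (equiv (l.map fun y => of (syl y)).prod)
    rw [hk, ← pow_succ', hpow, hpow, weight_equiv_prod_of_isChain hpow l hl.tail] at this
    rw [List.map_cons, List.prod_cons, equiv_mul, List.length_cons]
    omega

end Chains

end Monoid.CoprodI.Word

open Monoid CoprodI

/-- `(i, true)` is the `i`-th generator among `a, b, c` and `(i, false)` its inverse. -/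
abbrev Letter : Type := Fin 3 × Bool

namespace Letter

def toGp (x : Letter) : Gp := if x.2 then PresentedGroup.of x.1 else (PresentedGroup.of x.1)⁻¹

def inv (x : Letter) : Letter := (x.1, !x.2)

def factor (x : Letter) : Bool := decide (x.1 = 2)

def syllable (x : Letter) : Multiplicative (ℤ × ℤ) :=
  Multiplicative.ofAdd ((if x.2 then 1 else -1) • if x.1 = 1 then ((0, 1) : ℤ × ℤ) else (1, 0))

def AllowedPair (x y : Letter) : Prop := (x.1 ≠ 2 → y.1 = 2) ∧ y ≠ x.inv

instance : DecidableRel AllowedPair := fun _ _ => inferInstanceAs (Decidable (_ ∧ _))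

end Letter

def l1Norm (v : Multiplicative (ℤ × ℤ)) : ℕ :=
  (Multiplicative.toAdd v).1.natAbs + (Multiplicative.toAdd v).2.natAbs

theorem l1Norm_mul_le (v w : Multiplicative (ℤ × ℤ)) : l1Norm (v * w) ≤ l1Norm v + l1Norm w := by
  have := Int.natAbs_add_le (Multiplicative.toAdd v).1 (Multiplicative.toAdd w).1
  have := Int.natAbs_add_le (Multiplicative.toAdd v).2 (Multiplicative.toAdd w).2
  simp only [l1Norm, toAdd_mul, Prod.fst_add, Prod.snd_add]
  omega

theorem Letter.l1Norm_syllable_pow (x : Letter) (k : ℕ) : l1Norm (x.syllable ^ k) = k := by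
  rcases x with ⟨i, s⟩
  fin_cases i <;> cases s <;> simp [l1Norm, Letter.syllable, ← ofAdd_nsmul]

/-- `ℤ² * ℤ` as a free product of two copies of `ℤ²`, so that one norm serves both factors;
`c` goes to `(1, 0)` in the copy indexed by `true`. -/
abbrev FreeProd : Type := CoprodI fun _ : Bool => Multiplicative (ℤ × ℤ)

noncomputable def toFreeProd : Gp →* FreeProd :=
  PresentedGroup.toGroup
    (f := fun i => of (i := Letter.factor (i, true)) (Letter.syllable (i, true)))
    (by
      simp only [theRels, Set.mem_singleton_iff, forall_eq, map_mul, map_inv,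
        FreeGroup.lift_apply_of]
      show of (i := false) _ * of _ * (of _)⁻¹ * (of _)⁻¹ = 1
      rw [mul_inv_eq_one, mul_inv_eq_iff_eq_mul]
      exact ((Commute.all _ _).map (of (i := false))).eq)

theorem Letter.syllable_inv (x : Letter) : x.inv.syllable = x.syllable⁻¹ := by
  rcases x with ⟨i, s⟩
  fin_cases i <;> cases s <;> rfl

theorem toFreeProd_toGp (x : Letter) : toFreeProd x.toGp = of (i := x.factor) x.syllable := by
  rcases x with ⟨i, _ | _⟩
  · rw [Letter.toGp, if_neg Bool.false_ne_true, map_inv, toFreeProd, PresentedGroup.toGroup.of,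
      ← map_inv, ← Letter.syllable_inv]
    rfl
  · rw [Letter.toGp, if_pos rfl, toFreeProd, PresentedGroup.toGroup.of]

noncomputable def abelianize : Gp →* Multiplicative (Fin 3 → ℤ) :=
  PresentedGroup.toGroup (f := fun i => Multiplicative.ofAdd (Pi.single i 1)) (by
    simp only [theRels, Set.mem_singleton_iff, forall_eq, map_mul, map_inv,
      FreeGroup.lift_apply_of]
    rw [mul_inv_eq_one, mul_inv_eq_iff_eq_mul, mul_comm])

theorem Letter.toGp_injective : Function.Injective Letter.toGp := by
  have key : ∀ x : Letter, abelianize x.toGp =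
      Multiplicative.ofAdd ((if x.2 then 1 else -1) • Pi.single x.1 1) := by
    rintro ⟨i, _ | _⟩ <;> simp [Letter.toGp, abelianize, PresentedGroup.toGroup.of, ← ofAdd_neg]
  have hinj : ∀ x y : Letter, ((if x.2 then 1 else -1) • Pi.single x.1 1 : Fin 3 → ℤ) =
      (if y.2 then 1 else -1) • Pi.single y.1 1 → x = y := by decide
  intro x y hxy
  exact hinj x y (Multiplicative.ofAdd.injective (by rw [← key, ← key, hxy]))

namespace Letter

theorem range_toGp : Set.range toGp = letters := by
  ext g
  constructor
  · rintro ⟨⟨i, _ | _⟩, rfl⟩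
    exacts [⟨i, Or.inr rfl⟩, ⟨i, Or.inl rfl⟩]
  · rintro ⟨i, rfl | rfl⟩
    exacts [⟨(i, true), rfl⟩, ⟨(i, false), rfl⟩]

theorem toGp_inv (x : Letter) : x.inv.toGp = x.toGp⁻¹ := by
  rcases x with ⟨i, _ | _⟩ <;> simp [toGp, inv]

theorem toGp_mul_eq_one_iff {x y : Letter} : x.toGp * y.toGp = 1 ↔ y = x.inv := by
  rw [mul_eq_one_iff_eq_inv', ← toGp_inv, toGp_injective.eq_iff]

theorem toGp_mem_abLetters {x : Letter} : x.toGp ∈ abLetters ↔ x.1 ≠ 2 := by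
  have : ∀ x : Letter,
      (∃ i : Fin 2, x = (i.castSucc, true) ∨ x = (i.castSucc, false)) ↔ x.1 ≠ 2 := by
    decide
  rw [← this]
  simp only [abLetters, Set.mem_ofPred_eq]
  exact exists_congr fun i => or_congr (toGp_injective.eq_iff' rfl) (toGp_injective.eq_iff' rfl)

theorem toGp_mem_cLetters {x : Letter} : x.toGp ∈ cLetters ↔ x.1 = 2 := by
  have : ∀ x : Letter, (x = (2, true) ∨ x = (2, false)) ↔ x.1 = 2 := by decide
  rw [← this]
  exact or_congr (toGp_injective.eq_iff' rfl) (toGp_injective.eq_iff' rfl)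

end Letter

theorem wl_prod_le_length {w : List Gp} (hw : ∀ x ∈ w, x ∈ letters) : wl w.prod ≤ w.length :=
  Nat.sInf_le ⟨w, hw, rfl, rfl⟩

theorem isGeodesicWord_of_forall_length_le {w : List Gp} (hw : ∀ x ∈ w, x ∈ letters)
    (hmin : ∀ w' : List Gp, (∀ x ∈ w', x ∈ letters) → w'.prod = w.prod → w.length ≤ w'.length) :
    IsGeodesicWord w := by
  refine ⟨hw, le_antisymm (wl_prod_le_length hw) (le_csInf ⟨_, w, hw, rfl, rfl⟩ ?_)⟩
  rintro _ ⟨w', hw', hprod, rfl⟩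
  exact hmin w' hw' hprod

theorem IsGeodesicWord.isChain_mul_ne_one {w : List Gp} (hw : IsGeodesicWord w) :
    w.IsChain fun x y => x * y ≠ 1 := by
  refine List.isChain_iff_forall_rel_of_append_cons_cons.mpr fun x y u v huv hxy => ?_
  subst huv
  have hshort := wl_prod_le_length (w := u ++ v) fun z hz =>
    hw.1 z (by simp only [List.mem_append, List.mem_cons] at hz ⊢; tauto)
  rw [show (u ++ v).prod = (u ++ x :: y :: v).prod by simp [← mul_assoc, hxy], hw.2] at hshort
  simp at hshort

theorem abFollowedByC_iff_isChain (w : List Gp) :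
    ABFollowedByC w ↔ w.IsChain fun x y => x ∈ abLetters → y ∈ cLetters := by
  simp only [ABFollowedByC, List.isChain_iff_getElem]
  refine forall_congr' fun k => ⟨fun h hk => ?_, fun h hk => ?_⟩
  · simpa [List.getD_eq_getElem, hk, Nat.lt_of_succ_lt hk] using h hk
  · simpa [List.getD_eq_getElem, hk, Nat.lt_of_succ_lt hk] using h hk

noncomputable def freeProdWeight (g : Gp) : ℕ :=
  Word.weight (fun _ => l1Norm) (Word.equiv (toFreeProd g))

theorem freeProdWeight_prod_le {w : List Gp} (hw : ∀ x ∈ w, x ∈ letters) :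
    freeProdWeight w.prod ≤ w.length := by
  induction w with
  | nil => simp [freeProdWeight, Word.equiv_one]
  | cons g w ih =>
    obtain ⟨x, rfl⟩ : g ∈ Set.range Letter.toGp := Letter.range_toGp ▸ hw g List.mem_cons_self
    have hstep := Word.weight_of_smul_le (N := fun _ => l1Norm) (i := x.factor) rfl
      l1Norm_mul_le x.syllable (Word.equiv (toFreeProd w.prod))
    have hx : l1Norm x.syllable = 1 := by simpa using x.l1Norm_syllable_pow 1
    have := ih fun y hy => hw y (List.mem_cons_of_mem _ hy)
    rw [freeProdWeight] at this ⊢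
    rw [List.prod_cons, map_mul, toFreeProd_toGp, Word.equiv_mul, List.length_cons]
    omega

theorem Letter.AllowedPair.factor_ne_or_eq {x y : Letter} :
    AllowedPair x y → x.factor ≠ y.factor ∨ x = y := by
  revert x y
  decide

theorem isGeodesicWord_map_toGp {l : List Letter}
    (hl : l.IsChain fun x y => x.factor ≠ y.factor ∨ x = y) :
    IsGeodesicWord (l.map Letter.toGp) := by
  have hw : ∀ g ∈ l.map Letter.toGp, g ∈ letters := by
    rw [← Letter.range_toGp]
    exact fun g hg => List.mem_map.mp hg |>.imp fun _ h => h.2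
  refine isGeodesicWord_of_forall_length_le hw fun w' hw' hprod => ?_
  have hweight : freeProdWeight (l.map Letter.toGp).prod = l.length := by
    rw [freeProdWeight, map_list_prod, List.map_map]
    simp only [Function.comp_def, toFreeProd_toGp]
    exact Word.weight_equiv_prod_of_isChain (N := fun _ => l1Norm)
      (fun x k => x.l1Norm_syllable_pow k) l hl
  rw [List.length_map, ← hweight, ← hprod]
  exact freeProdWeight_prod_le hw'

theorem isGeodesicWord_and_abFollowedByC_iff (l : List Letter) :
    IsGeodesicWord (l.map Letter.toGp) ∧ ABFollowedByC (l.map Letter.toGp) ↔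
      l.IsChain Letter.AllowedPair := by
  rw [abFollowedByC_iff_isChain, List.isChain_map]
  constructor
  · rintro ⟨hgeo, hab⟩
    have hne := hgeo.isChain_mul_ne_one
    rw [List.isChain_map] at hne
    rw [List.isChain_iff_getElem] at hab hne ⊢
    intro i hi
    simpa only [Letter.AllowedPair, Letter.toGp_mem_abLetters, Letter.toGp_mem_cLetters,
      Ne, Letter.toGp_mul_eq_one_iff] using And.intro (hab i hi) (hne i hi)
  · intro hl
    refine ⟨isGeodesicWord_map_toGp (hl.imp fun _ _ => Letter.AllowedPair.factor_ne_or_eq),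
      hl.imp fun _ _ h => ?_⟩
    rw [Letter.toGp_mem_abLetters, Letter.toGp_mem_cLetters]
    exact h.1

theorem counted_words_eq_image (n : ℕ) :
    {w : List Gp | IsGeodesicWord w ∧ ABFollowedByC w ∧ w.length = n} =
      List.map Letter.toGp '' {l | l.IsChain Letter.AllowedPair ∧ l.length = n} := by
  ext w
  constructor
  · rintro ⟨hgeo, hab, rfl⟩
    obtain ⟨l, rfl⟩ : w ∈ Set.range (List.map Letter.toGp) := by
      rw [Set.range_list_map, Letter.range_toGp]
      exact hgeo.1
    exact ⟨l, ⟨(isGeodesicWord_and_abFollowedByC_iff l).1 ⟨hgeo, hab⟩, (List.length_map _).symm⟩,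
      rfl⟩
  · rintro ⟨l, ⟨hl, rfl⟩, rfl⟩
    obtain ⟨hgeo, hab⟩ := (isGeodesicWord_and_abFollowedByC_iff l).2 hl
    exact ⟨hgeo, hab, List.length_map _⟩

section Counting

variable {α : Type*}

theorem ncard_length_zero {P : List α → Prop} (h : P []) :
    {l | P l ∧ l.length = 0}.ncard = 1 := by
  rw [Set.ncard_eq_one]
  exact ⟨[], by ext l; simp +contextual [h]⟩

variable [Fintype α]

theorem ncard_length_succ (P : List α → Prop) (n : ℕ) :
    {l | P l ∧ l.length = n + 1}.ncard = ∑ x, {l | P (x :: l) ∧ l.length = n}.ncard := by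
  have : ∀ x : α, Finite {l | P (x :: l) ∧ l.length = n} := fun x =>
    ((List.finite_length_eq α n).subset fun l hl => hl.2).to_subtype
  simp_rw [← Nat.card_coe_set_eq]
  rw [← Nat.card_sigma]
  symm
  refine Nat.card_eq_of_bijective (fun p => ⟨p.1 :: p.2.1, p.2.2.1, by simp [p.2.2.2]⟩) ⟨?_, ?_⟩
  · rintro ⟨x, l, hl⟩ ⟨y, m, hm⟩ h
    simp only [Subtype.mk.injEq, List.cons.injEq] at h
    obtain ⟨rfl, rfl⟩ := h
    rfl
  · rintro ⟨_ | ⟨x, l⟩, hP, hlen⟩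
    · simp at hlen
    · exact ⟨⟨x, l, hP, by simpa using hlen⟩, rfl⟩

variable (R : α → α → Prop) [DecidableRel R]

theorem ncard_isChain_cons_succ (x : α) (n : ℕ) :
    {l | (x :: l).IsChain R ∧ l.length = n + 1}.ncard =
      ∑ y, if R x y then {l | (y :: l).IsChain R ∧ l.length = n}.ncard else 0 := by
  rw [ncard_length_succ (fun l => (x :: l).IsChain R)]
  refine Finset.sum_congr rfl fun y _ => ?_
  split_ifs with h <;> simp [h]

end Counting

/-- The numbers of admissible continuations of length `n` of a letter `a^{±1}, b^{±1}` and of a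
letter `c^{±1}`; the recursion is the transfer matrix of `Letter.AllowedPair`. -/
def chainCounts : ℕ → ℕ × ℕ
  | 0 => (1, 1)
  | n + 1 => (2 * (chainCounts n).2, 4 * (chainCounts n).1 + (chainCounts n).2)

theorem Letter.sum_allowedPair (x : Letter) (p q : ℕ) :
    (∑ y : Letter, if AllowedPair x y then (if y.1 = 2 then q else p) else 0) =
      if x.1 = 2 then 4 * p + q else 2 * q := by
  rcases x with ⟨i, s⟩
  fin_cases i <;> cases s <;>
    simp +arith [Fintype.sum_prod_type, Fin.sum_univ_three, AllowedPair, Letter.inv]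

theorem ncard_isChain_allowedPair_cons (x : Letter) (n : ℕ) :
    {l | (x :: l).IsChain Letter.AllowedPair ∧ l.length = n}.ncard =
      if x.1 = 2 then (chainCounts n).2 else (chainCounts n).1 := by
  induction n generalizing x with
  | zero => rw [ncard_length_zero (List.isChain_singleton x)]; split_ifs <;> rfl
  | succ n ih =>
    simp_rw [ncard_isChain_cons_succ, ih, Letter.sum_allowedPair]
    rfl

theorem ncard_isChain_allowedPair_succ (n : ℕ) :
    {l : List Letter | l.IsChain Letter.AllowedPair ∧ l.length = n + 1}.ncard =
      4 * (chainCounts n).1 + 2 * (chainCounts n).2 := by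
  rw [ncard_length_succ]
  simp_rw [ncard_isChain_allowedPair_cons]
  simp +arith [Fintype.sum_prod_type, Fin.sum_univ_three]

/-- the number `h_n` of geodesic words of length `n` over the
six-letter alphabet of `G = ⟨a,b,c ∣ aba⁻¹b⁻¹⟩` in which every non-final
letter from `{a, a⁻¹, b, b⁻¹}` is immediately followed by `c` or `c⁻¹`
satisfies `h₀ = 1`, `h₁ = 6`, `h₂ = 18`, and `h_n = h_{n-1} + 8 h_{n-2}` for
`n ≥ 3`. -/
theorem geodesic_growth_one_contracting (h : ℕ → ℕ)
    (hh : ∀ n, h n = Set.ncard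
      {w : List Gp | IsGeodesicWord w ∧ ABFollowedByC w ∧ w.length = n}) :
    h 0 = 1 ∧ h 1 = 6 ∧ h 2 = 18 ∧
      ∀ n, 3 ≤ n → h n = h (n - 1) + 8 * h (n - 2) := by
  have hcount (n : ℕ) :
      h n = {l : List Letter | l.IsChain Letter.AllowedPair ∧ l.length = n}.ncard := by
    rw [hh, counted_words_eq_image,
      Set.ncard_image_of_injective _ (List.map_injective_iff.mpr Letter.toGp_injective)]
  have hsucc (n : ℕ) : h (n + 1) = 4 * (chainCounts n).1 + 2 * (chainCounts n).2 :=
    (hcount _).trans (ncard_isChain_allowedPair_succ n)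
  refine ⟨(hcount 0).trans (ncard_length_zero List.IsChain.nil), hsucc 0, hsucc 1, fun n hn => ?_⟩
  obtain ⟨m, rfl⟩ := Nat.exists_eq_add_of_le' hn
  rw [show m + 3 - 1 = m + 1 + 1 by omega, show m + 3 - 2 = m + 1 by omega, hsucc, hsucc,
    hsucc]
  simp only [chainCounts]
  ring
end
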